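/- arXiv:1711.00809 — 6 statements merged into one kernel-verified Lean document; each statement's English description precedes it below -/
import Mathlib

section
/- Let g ≥ 2 be an even integer. Every integer n has a unique representation n = Σ_{i≥0} ε_i g^i where each ε_i ∈ {0, ±1, ..., ±g/2}, only finitely many ε_i are nonzero, and whenever |ε_i| = g/2 one has |ε_{i+1}| < g/2 and ε_i ε_{i+1} ≥ 0. -/
set_option linter.unusedSectionVars false

namespace GadicAux

def digit (g n : ℤ) : ℤ :=
  if n % g < g / 2 then n % g
  else if g / 2 < n % g then n % g - g
  else if (n / g) % g < g / 2 then g / 2 else -(g / 2)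

def step (g n : ℤ) : ℤ := (n - digit g n) / g

section
variable {g : ℤ} (hg : 2 ≤ g) (he : Even g)

lemma digit_of_lt {n : ℤ} (h : n % g < g / 2) : digit g n = n % g := if_pos h

lemma digit_of_gt {n : ℤ} (h : g / 2 < n % g) : digit g n = n % g - g := by
  rw [digit, if_neg (by omega), if_pos h]

lemma digit_tie_pos {n : ℤ} (h : n % g = g / 2) (hs : (n / g) % g < g / 2) :
    digit g n = g / 2 := by
  rw [digit, if_neg (by omega), if_neg (by omega), if_pos hs]

lemma digit_tie_neg {n : ℤ} (h : n % g = g / 2) (hs : ¬ (n / g) % g < g / 2) :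
    digit g n = -(g / 2) := by
  rw [digit, if_neg (by omega), if_neg (by omega), if_neg hs]

include hg he in
lemma gh : g = 2 * (g / 2) := by obtain ⟨k, hk⟩ := he; omega

include hg in
lemma emod_base (n : ℤ) : 0 ≤ n % g ∧ n % g < g :=
  ⟨Int.emod_nonneg n (by omega), Int.emod_lt_of_pos n (by omega)⟩

include hg he in
lemma dvd_sub_digit (n : ℤ) : g ∣ n - digit g n := by
  have h2 := gh hg he
  have hb := emod_base hg n
  have hd : g ∣ n - n % g := ⟨n / g, by rw [Int.emod_def]; ring⟩
  unfold digit
  split_ifs with h1 h2' h3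
  · exact hd
  · have : n - (n % g - g) = (n - n % g) + g := by ring
    rw [this]; exact dvd_add hd dvd_rfl
  · have hr : n % g = g / 2 := by omega
    rw [← hr]; exact hd
  · have hr : n % g = g / 2 := by omega
    have : n - -(g / 2) = (n - n % g) + g := by omega
    rw [this]; exact dvd_add hd dvd_rfl

include hg he in
lemma digit_add_mul (n : ℤ) : n = digit g n + g * step g n := by
  obtain ⟨c, hc⟩ := dvd_sub_digit hg he n
  have hs : step g n = c := by rw [step, hc, Int.mul_ediv_cancel_left _ (by omega)]
  rw [hs]; omega

include hg he in
lemma digit_bound (n : ℤ) : |digit g n| ≤ g / 2 := by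
  have hb := emod_base hg n
  have h2 := gh hg he
  unfold digit
  split_ifs <;> rw [abs_le] <;> omega

include hg in
lemma digit_zero : digit g 0 = 0 := by
  rw [digit]
  have : (0 : ℤ) % g = 0 := Int.zero_emod g
  rw [this]
  simp only [if_pos (by omega : (0:ℤ) < g / 2)]

include hg in
lemma step_zero : step g 0 = 0 := by
  rw [step, digit_zero hg]; simp

include hg he in
lemma step_eq₁ {n : ℤ} (hd : digit g n = n % g) : step g n = n / g := by
  have h1 := digit_add_mul hg he n
  have h2 : n % g = n - g * (n / g) := Int.emod_def n g
  have : g * step g n = g * (n / g) := by omega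
  exact mul_left_cancel₀ (by omega : g ≠ 0) this

include hg he in
lemma step_eq₂ {n : ℤ} (hd : digit g n = n % g - g) : step g n = n / g + 1 := by
  have h1 := digit_add_mul hg he n
  have h2 : n % g = n - g * (n / g) := Int.emod_def n g
  have : g * step g n = g * (n / g + 1) := by rw [mul_add]; omega
  exact mul_left_cancel₀ (by omega : g ≠ 0) this

include hg he in
lemma digit_chain {n : ℤ} (hd : |digit g n| = g / 2) :
    |digit g (step g n)| < g / 2 ∧ 0 ≤ digit g n * digit g (step g n) := by
  have h2 := gh hg he
  have hb := emod_base hg n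
  have hbm := emod_base hg (n / g)
  set h := g / 2 with hh
  -- first: n % g = h
  have hr : n % g = h := by
    by_contra hne
    rcases lt_or_gt_of_ne hne with hlt | hgt
    · rw [digit_of_lt hlt] at hd; rw [abs_of_nonneg (by omega)] at hd; omega
    · rw [digit_of_gt hgt] at hd; rw [abs_of_nonpos (by omega)] at hd; omega
  set m := n / g with hm
  set s := m % g with hs
  by_cases hcase : s < h
  · -- digit = h, step = m
    have hdp : digit g n = h := digit_tie_pos hr hcase
    have hstep : step g n = m := step_eq₁ hg he (by rw [hdp, hr])
    rw [hstep, hdp, digit_of_lt (by rw [← hs]; exact hcase)]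
    constructor
    · rw [abs_of_nonneg (by omega)]; omega
    · exact mul_nonneg (by omega) hbm.1
  · -- digit = -h, step = m + 1
    have hdp : digit g n = -h := digit_tie_neg hr hcase
    have hstep : step g n = m + 1 := step_eq₂ hg he (by rw [hdp, hr]; omega)
    rw [hstep, hdp]
    have h1g : (1:ℤ) % g = 1 := Int.emod_eq_of_lt (by omega) (by omega)
    have hm1 : (m + 1) % g = (s + 1) % g := by rw [Int.add_emod, h1g, ← hs]
    by_cases htop : s = g - 1
    · have : (m + 1) % g = 0 := by
        rw [hm1, htop]; simp
      rw [digit_of_lt (by omega)]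
      rw [this]
      constructor
      · rw [abs_of_nonneg le_rfl]; omega
      · simp
    · have hlt : s + 1 < g := by omega
      have : (m + 1) % g = s + 1 := by rw [hm1, Int.emod_eq_of_lt (by omega) hlt]
      have hgt : h < (m + 1) % g := by omega
      rw [digit_of_gt hgt, this]
      constructor
      · rw [abs_of_nonpos (by omega)]; omega
      · nlinarith [hb.1, hb.2]

include hg he in
lemma digit_self {n : ℤ} (hn : |n| ≤ g / 2) : digit g n = n := by
  have h2 := gh hg he
  set h := g / 2 with hh
  have habs := abs_le.mp hn
  by_cases h0 : 0 ≤ n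
  · by_cases hnh : n < h
    · have hm : n % g = n := Int.emod_eq_of_lt h0 (by omega)
      rw [digit_of_lt (by omega)]; exact hm
    · have hn' : n = h := by omega
      have hm : n % g = h := by rw [hn']; exact Int.emod_eq_of_lt (by omega) (by omega)
      have hdiv : n / g = 0 := Int.ediv_eq_zero_of_lt (by omega) (by omega)
      rw [digit_tie_pos hm (by rw [hdiv]; simp; omega), hn']
  · have hng : (n + g) % g = n % g := by
      simpa using Int.add_mul_emod_self_left (a := n) (b := g) (c := 1)
    by_cases hnh : -h < n
    · have hm : n % g = n + g := by
        rw [← hng]; exact Int.emod_eq_of_lt (by omega) (by omega)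
      rw [digit_of_gt (by omega), hm]; ring
    · have hn' : n = -h := by omega
      have hm : n % g = h := by
        rw [← hng]
        have : n + g = h := by omega
        rw [this]; exact Int.emod_eq_of_lt (by omega) (by omega)
      have hdef : n % g = n - g * (n / g) := Int.emod_def n g
      have hdiv : n / g = -1 := by
        have : g * (n / g) = g * (-1) := by omega
        exact mul_left_cancel₀ (by omega : g ≠ 0) this
      have hs : (n / g) % g = g - 1 := by
        rw [hdiv]
        have : (-1 + g) % g = (-1 : ℤ) % g := by
          simpa using Int.add_mul_emod_self_left (a := (-1:ℤ)) (b := g) (c := 1)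
        have h2 : (-1 + g) % g = -1 + g := Int.emod_eq_of_lt (by omega) (by omega)
        omega
      rw [digit_tie_neg hm (by omega), hn']

include hg he in
lemma step_small {n : ℤ} (hn : |n| ≤ g / 2) : step g n = 0 := by
  have h1 := digit_add_mul hg he n
  rw [digit_self hg he hn] at h1
  have : g * step g n = g * 0 := by omega
  exact mul_left_cancel₀ (by omega : g ≠ 0) this

include hg he in
lemma natAbs_step_lt {n : ℤ} (hn : n ≠ 0) : (step g n).natAbs < n.natAbs := by
  by_cases hsm : |n| ≤ g / 2
  · rw [step_small hg he hsm]
    simpa using Int.natAbs_pos.mpr hn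
  · have h1 := digit_add_mul hg he n
    have hd := digit_bound hg he n
    have key : g * |step g n| ≤ |n| + g / 2 := by
      have heq : |g * step g n| = g * |step g n| := by
        rw [abs_mul, abs_of_pos (by omega : (0:ℤ) < g)]
      have heq2 : g * step g n = n - digit g n := by omega
      rw [← heq, heq2]
      calc |n - digit g n| ≤ |n| + |digit g n| := by
            rw [sub_eq_add_neg]
            exact (abs_add_le n (-digit g n)).trans_eq (by rw [abs_neg])
        _ ≤ |n| + g / 2 := by omega
    have h2 := gh hg he
    have hlt : g * |step g n| < g * |n| := by
      have hb : g / 2 < |n| := by omega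
      have : 2 * |n| ≤ g * |n| := mul_le_mul_of_nonneg_right (by omega) (abs_nonneg n)
      omega
    have habs : |step g n| < |n| := lt_of_mul_lt_mul_left hlt (by omega)
    rw [Int.abs_eq_natAbs, Int.abs_eq_natAbs] at habs
    exact_mod_cast habs

include hg he in
lemma iter_eq_zero : ∀ (N : ℕ) (n : ℤ), n.natAbs ≤ N → (step g)^[N] n = 0 := by
  intro N
  induction N with
  | zero =>
    intro n h
    simp only [Function.iterate_zero, id_eq]
    omega
  | succ N ih =>
    intro n h
    rw [Function.iterate_succ_apply]
    apply ih
    by_cases h0 : n = 0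
    · subst h0; rw [step_zero hg]; simp
    · have := natAbs_step_lt hg he h0; omega

include hg he in
lemma sum_range_digits : ∀ (N : ℕ) (n : ℤ), (step g)^[N] n = 0 →
    ∑ i ∈ Finset.range N, digit g ((step g)^[i] n) * g ^ i = n := by
  intro N
  induction N with
  | zero => intro n h; simp only [Function.iterate_zero, id_eq] at h; simp [h]
  | succ N ih =>
    intro n h
    rw [Finset.sum_range_succ']
    simp only [Function.iterate_succ_apply, Function.iterate_zero, id_eq, pow_zero, mul_one]
    have hih := ih (step g n) (by rw [← Function.iterate_succ_apply]; exact h)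
    have hmul : ∑ i ∈ Finset.range N, digit g ((step g)^[i] (step g n)) * g ^ (i + 1)
        = g * ∑ i ∈ Finset.range N, digit g ((step g)^[i] (step g n)) * g ^ i := by
      rw [Finset.mul_sum]; apply Finset.sum_congr rfl; intro i _; ring
    rw [hmul, hih]
    linarith [digit_add_mul hg he n]

lemma sum_eq_range (f : ℕ →₀ ℤ) (N : ℕ) (h : ∀ i, f i ≠ 0 → i < N) :
    f.sum (fun i c => c * g ^ i) = ∑ i ∈ Finset.range N, f i * g ^ i :=
  Finsupp.sum_of_support_subset f
    (fun i hi => Finset.mem_range.mpr (h i (Finsupp.mem_support_iff.mp hi))) _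
    (fun i _ => by simp)

noncomputable def fshift (f : ℕ →₀ ℤ) : ℕ →₀ ℤ :=
  Finsupp.comapDomain (· + 1) f (fun a _ b _ hab => by simpa using hab)

@[simp] lemma fshift_apply (f : ℕ →₀ ℤ) (i : ℕ) : fshift f i = f (i + 1) := rfl

lemma sum_shift (f : ℕ →₀ ℤ) :
    f.sum (fun i c => c * g ^ i) = f 0 + g * (fshift f).sum (fun i c => c * g ^ i) := by
  set N := f.support.sup id + 1 with hN
  have h1 : ∀ i, f i ≠ 0 → i < N + 1 := by
    intro i hi
    have := Finset.le_sup (f := id) (Finsupp.mem_support_iff.mpr hi)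
    simp only [id_eq] at this; omega
  have h2 : ∀ i, fshift f i ≠ 0 → i < N := by
    intro i hi
    rw [fshift_apply] at hi
    have := Finset.le_sup (f := id) (Finsupp.mem_support_iff.mpr hi)
    simp only [id_eq] at this; omega
  rw [sum_eq_range f (N + 1) h1, sum_eq_range (fshift f) N h2]
  rw [Finset.sum_range_succ']
  simp only [fshift_apply, pow_zero, mul_one]
  have : ∑ i ∈ Finset.range N, f (i + 1) * g ^ (i + 1)
      = g * ∑ i ∈ Finset.range N, f (i + 1) * g ^ i := by
    rw [Finset.mul_sum]; apply Finset.sum_congr rfl; intro i _; ring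
  rw [this]; ring

include hg in
lemma eq_zero_of_sum_zero (f : ℕ →₀ ℤ) (hb : ∀ i, |f i| < g)
    (hsum : f.sum (fun i c => c * g ^ i) = 0) : f = 0 := by
  by_contra hne
  have hsupp : f.support.Nonempty := Finsupp.support_nonempty_iff.mpr hne
  set j := f.support.min' hsupp with hj
  have hjmem : j ∈ f.support := f.support.min'_mem hsupp
  have hsum' : ∑ i ∈ f.support, f i * g ^ i = 0 := hsum
  rw [← Finset.add_sum_erase _ _ hjmem] at hsum'
  have hdvd : (g ^ (j + 1)) ∣ ∑ i ∈ f.support.erase j, f i * g ^ i := by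
    apply Finset.dvd_sum
    intro i hi
    have hij : i ≠ j := Finset.ne_of_mem_erase hi
    have hji : j ≤ i := f.support.min'_le i (Finset.mem_of_mem_erase hi)
    exact Dvd.dvd.mul_left (pow_dvd_pow g (by omega)) _
  have hdvd2 : (g ^ (j + 1)) ∣ f j * g ^ j := by
    have : f j * g ^ j = -(∑ i ∈ f.support.erase j, f i * g ^ i) := by linarith
    rw [this]; exact dvd_neg.mpr hdvd
  have hgdvd : g ∣ f j := by
    have hpow : (0:ℤ) < g ^ j := pow_pos (by omega) j
    have h1 : g ^ j * g ∣ g ^ j * f j := by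
      have e1 : g ^ j * g = g ^ (j + 1) := (pow_succ g j).symm
      have e2 : g ^ j * f j = f j * g ^ j := mul_comm _ _
      rw [e1, e2]; exact hdvd2
    exact (mul_dvd_mul_iff_left (by positivity : (g:ℤ) ^ j ≠ 0)).mp h1
  have : f j = 0 := Int.eq_zero_of_abs_lt_dvd hgdvd (hb j)
  exact (Finsupp.mem_support_iff.mp hjmem) this

include hg he in
lemma head (f : ℕ →₀ ℤ) (hv1 : ∀ i, |f i| ≤ g / 2)
    (hv2 : ∀ i, |f i| = g / 2 → |f (i + 1)| < g / 2 ∧ 0 ≤ f i * f (i + 1)) :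
    f 0 = digit g (f.sum (fun i c => c * g ^ i)) ∧
    (fshift f).sum (fun i c => c * g ^ i) = step g (f.sum (fun i c => c * g ^ i)) := by
  have h2 := gh hg he
  set n := f.sum (fun i c => c * g ^ i) with hn
  set M := (fshift f).sum (fun i c => c * g ^ i) with hM
  set M2 := (fshift (fshift f)).sum (fun i c => c * g ^ i) with hM2
  have e1 : n = f 0 + g * M := sum_shift f
  have e2 : M = f 1 + g * M2 := by
    have h := sum_shift (g := g) (fshift f)
    rw [fshift_apply] at h
    exact h
  clear_value M2 M n
  have hf0 := abs_le.mp (hv1 0)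
  have hnmod : n % g = f 0 % g := by rw [e1]; exact Int.add_mul_emod_self_left ..
  have hMmod : M % g = f 1 % g := by rw [e2]; exact Int.add_mul_emod_self_left ..
  have hd : f 0 = digit g n := by
    by_cases hA : f 0 = g / 2
    · -- tie, positive
      have hnm : n % g = g / 2 := by
        rw [hnmod, hA]; exact Int.emod_eq_of_lt (by omega) (by omega)
      have hdiv : n / g = M := by
        have hdef : n % g = n - g * (n / g) := Int.emod_def n g
        have h : g * (n / g) = g * M := by omega
        exact mul_left_cancel₀ (by omega : g ≠ 0) h
      obtain ⟨hb1, hb2⟩ := hv2 0 (by rw [hA]; exact abs_of_nonneg (by omega))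
      simp only [zero_add] at hb1 hb2
      have hf1pos : 0 ≤ f 1 := by
        by_contra hcon
        push_neg at hcon
        have h := mul_neg_of_pos_of_neg (show (0:ℤ) < f 0 by omega) hcon
        linarith
      have hf1lt := abs_lt.mp hb1
      have hMm : M % g = f 1 := by
        rw [hMmod]; exact Int.emod_eq_of_lt hf1pos (by omega)
      rw [digit_tie_pos hnm (by rw [hdiv]; omega), hA]
    · by_cases hB : f 0 = -(g / 2)
      · -- tie, negative
        have hnm : n % g = g / 2 := by
          rw [hnmod, hB]
          have hfg : (-(g / 2) + g) % g = (-(g / 2)) % g := by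
            simpa using Int.add_mul_emod_self_left (a := -(g / 2)) (b := g) (c := 1)
          have hval : -(g / 2) + g = g / 2 := by omega
          rw [← hfg, hval]
          exact Int.emod_eq_of_lt (by omega) (by omega)
        have hdiv : n / g = M - 1 := by
          have hdef : n % g = n - g * (n / g) := Int.emod_def n g
          have h : g * (n / g) = g * (M - 1) := by rw [mul_sub]; omega
          exact mul_left_cancel₀ (by omega : g ≠ 0) h
        obtain ⟨hb1, hb2⟩ := hv2 0 (by rw [hB, abs_neg]; exact abs_of_nonneg (by omega))
        simp only [zero_add] at hb1 hb2
        have hf1neg : f 1 ≤ 0 := by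
          by_contra hcon
          push_neg at hcon
          have h := mul_neg_of_neg_of_pos (show f 0 < 0 by omega) hcon
          linarith
        have hf1lt := abs_lt.mp hb1
        have hs : ¬ (n / g) % g < g / 2 := by
          rw [hdiv]
          have e3 : M - 1 = (f 1 - 1) + g * M2 := by omega
          have hm1 : (M - 1) % g = (f 1 - 1) % g := by
            rw [e3]; exact Int.add_mul_emod_self_left ..
          have hfg : (f 1 - 1 + g) % g = (f 1 - 1) % g := by
            simpa using Int.add_mul_emod_self_left (a := f 1 - 1) (b := g) (c := 1)
          have hval : (f 1 - 1 + g) % g = f 1 - 1 + g :=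
            Int.emod_eq_of_lt (by omega) (by omega)
          omega
        rw [digit_tie_neg hnm hs, hB]
      · -- ordinary digit
        by_cases h0 : 0 ≤ f 0
        · have hmod : f 0 % g = f 0 := Int.emod_eq_of_lt h0 (by omega)
          rw [digit_of_lt (by omega)]; omega
        · have hfg : (f 0 + g) % g = f 0 % g := by
            simpa using Int.add_mul_emod_self_left (a := f 0) (b := g) (c := 1)
          have hmod : f 0 % g = f 0 + g := by
            rw [← hfg]; exact Int.emod_eq_of_lt (by omega) (by omega)
          rw [digit_of_gt (by omega)]; omega
  constructor
  · exact hd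
  · have h1 := digit_add_mul hg he n
    rw [← hd] at h1
    have h : g * M = g * step g n := by omega
    exact mul_left_cancel₀ (by omega : g ≠ 0) h

include hg he in
lemma valid_eq : ∀ (k : ℕ) (f : ℕ →₀ ℤ),
    (∀ i, |f i| ≤ g / 2) →
    (∀ i, |f i| = g / 2 → |f (i + 1)| < g / 2 ∧ 0 ≤ f i * f (i + 1)) →
    (f.sum (fun i c => c * g ^ i)).natAbs ≤ k →
    ∀ i, f i = digit g ((step g)^[i] (f.sum (fun i c => c * g ^ i))) := by
  intro k
  induction k with
  | zero =>
    intro f hv1 hv2 hk i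
    have hz : f.sum (fun i c => c * g ^ i) = 0 := by omega
    have hf0 : f = 0 :=
      eq_zero_of_sum_zero hg f (fun j => lt_of_le_of_lt (hv1 j) (by omega)) hz
    rw [hz, hf0, Function.iterate_fixed (step_zero hg), digit_zero hg]
    simp
  | succ k ih =>
    intro f hv1 hv2 hk i
    obtain ⟨hd, hsh⟩ := head hg he f hv1 hv2
    cases i with
    | zero => simpa using hd
    | succ j =>
      have hv1' : ∀ i, |fshift f i| ≤ g / 2 := fun i => hv1 (i + 1)
      have hv2' : ∀ i, |fshift f i| = g / 2 →
          |fshift f (i + 1)| < g / 2 ∧ 0 ≤ fshift f i * fshift f (i + 1) :=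
        fun i h => hv2 (i + 1) h
      have hk' : ((fshift f).sum (fun i c => c * g ^ i)).natAbs ≤ k := by
        rw [hsh]
        by_cases h0 : f.sum (fun i c => c * g ^ i) = 0
        · rw [h0, step_zero hg]; simp
        · have := natAbs_step_lt hg he h0; omega
      have hrec := ih (fshift f) hv1' hv2' hk' j
      rw [fshift_apply, hsh, ← Function.iterate_succ_apply] at hrec
      exact hrec

end
end GadicAux

/-- Nathanson's g-adic representation for even g ≥ 2. -/
theorem gadic_even_unique_representation (g : ℤ) (hg : 2 ≤ g) (heven : Even g) (n : ℤ) :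
    ∃! f : ℕ →₀ ℤ,
      (∀ i, |f i| ≤ g / 2) ∧
      (∀ i, |f i| = g / 2 → |f (i + 1)| < g / 2 ∧ 0 ≤ f i * f (i + 1)) ∧
      n = f.sum (fun i c => c * g ^ i) := by
  classical
  set D : ℕ → ℤ := fun i => GadicAux.digit g ((GadicAux.step g)^[i] n) with hD
  have hDzero : ∀ i, n.natAbs + 1 ≤ i → D i = 0 := by
    intro i hi
    have h0 : (GadicAux.step g)^[i] n = 0 := GadicAux.iter_eq_zero hg heven i n (by omega)
    show GadicAux.digit g ((GadicAux.step g)^[i] n) = 0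
    rw [h0]
    exact GadicAux.digit_zero hg
  set F : ℕ →₀ ℤ := Finsupp.onFinset (Finset.range (n.natAbs + 1)) D
    (fun i hi => Finset.mem_range.mpr (by
      by_contra hcon
      push_neg at hcon
      exact hi (hDzero i hcon))) with hF
  have hFapp : ∀ i, F i = D i := fun i => rfl
  refine ⟨F, ⟨?_, ?_, ?_⟩, ?_⟩
  · intro i
    rw [hFapp]
    exact GadicAux.digit_bound hg heven _
  · intro i hi
    rw [hFapp] at hi ⊢
    rw [hFapp]
    have h1 : D (i + 1) = GadicAux.digit g (GadicAux.step g ((GadicAux.step g)^[i] n)) := by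
      show GadicAux.digit g ((GadicAux.step g)^[i+1] n) = _
      rw [Function.iterate_succ_apply']
    rw [h1]
    exact GadicAux.digit_chain hg heven hi
  · have hsupp : ∀ i, F i ≠ 0 → i < n.natAbs + 1 := by
      intro i hi
      by_contra hcon
      push_neg at hcon
      exact hi (hDzero i hcon)
    rw [GadicAux.sum_eq_range F (n.natAbs + 1) hsupp]
    have heq : ∑ i ∈ Finset.range (n.natAbs + 1), F i * g ^ i
        = ∑ i ∈ Finset.range (n.natAbs + 1),
            GadicAux.digit g ((GadicAux.step g)^[i] n) * g ^ i := rfl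
    rw [heq, GadicAux.sum_range_digits hg heven (n.natAbs + 1) n
      (GadicAux.iter_eq_zero hg heven _ n (by omega))]
  · rintro f ⟨h1, h2, h3⟩
    ext i
    have hval := GadicAux.valid_eq hg heven
      (f.sum (fun i c => c * g ^ i)).natAbs f h1 h2 le_rfl i
    rw [← h3] at hval
    rw [hval, hFapp]
end

section
/- Let g ≥ 3 be odd and let n = Σ_{i≥0} ε_i g^i be the unique representation with digits |ε_i| ≤ (g-1)/2 and finite support. Then the g-length of n equals Σ_{i≥0} |ε_i|, where the g-length ℓ_g(n) is the minimal number k such that n can be written as a sum of k terms each of the form ±g^i with i ≥ 0. -/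
/-- The g-length of n: minimal number of summands ±g^i needed to write n. -/
noncomputable def glen (g n : ℤ) : ℕ :=
  sInf {k : ℕ | ∃ δ : Fin k → ℤ, ∃ e : Fin k → ℕ,
    (∀ j, δ j = 1 ∨ δ j = -1) ∧ n = ∑ j, δ j * g ^ (e j)}

namespace GlenAux

def bdig (g n : ℤ) : ℤ := Int.bmod n g.toNat

lemma bdig_bound {g : ℤ} (hg : 3 ≤ g) (n : ℤ) : 2 * |bdig g n| ≤ g := by
  have h0 : 0 < g.toNat := by omega
  have h1 := Int.le_bmod (x := n) h0
  have h2 := Int.bmod_lt (x := n) h0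
  have hc : ((g.toNat : ℤ)) = g := by omega
  rw [hc] at h1 h2
  unfold bdig
  rcases abs_cases (Int.bmod n g.toNat) with ⟨h, _⟩ | ⟨h, _⟩ <;> rw [h] <;> omega

lemma dvd_sub_bdig {g : ℤ} (hg : 3 ≤ g) (n : ℤ) : g ∣ n - bdig g n := by
  have h := Int.dvd_bmod_sub_self (x := n) (m := g.toNat)
  have hc : ((g.toNat : ℤ)) = g := by omega
  rw [hc] at h
  have := (dvd_neg (α := ℤ)).2 h
  simpa [bdig] using this

lemma shrink {g n ε m : ℤ} (hg : 3 ≤ g) (hn : n ≠ 0) (hε : 2 * |ε| ≤ g)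
    (hm : n - ε = g * m) : m.natAbs < n.natAbs := by
  rcases eq_or_ne m 0 with rfl | hm0
  · simp; omega
  · have h1 : |g * m| ≤ |n| + |ε| := by
      rw [← hm]; exact (abs_sub n ε)
    rw [abs_mul] at h1
    have hgabs : |g| = g := abs_of_nonneg (by omega)
    rw [hgabs] at h1
    have h2 : 1 ≤ |m| := by
      rcases abs_cases m with ⟨h, _⟩ | ⟨h, _⟩ <;> omega
    have h3 : 3 * |m| ≤ g * |m| := by nlinarith [abs_nonneg m]
    have : |m| < |n| := by nlinarith [abs_nonneg n]
    rcases abs_cases m with ⟨hh, _⟩ | ⟨hh, _⟩ <;> rcases abs_cases n with ⟨hh2, _⟩ | ⟨hh2, _⟩ <;>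
      omega

def S (g : ℤ) (hg : 3 ≤ g) : ℤ → ℕ := fun n =>
  if h : n = 0 then 0
  else
    have hdvd := dvd_sub_bdig hg n
    have hb := bdig_bound hg n
    (bdig g n).natAbs + S g hg ((n - bdig g n) / g)
termination_by n => n.natAbs
decreasing_by
  obtain ⟨m, hm⟩ := hdvd
  rw [hm, Int.mul_ediv_cancel_left _ (by omega : g ≠ 0)]
  exact shrink hg h hb hm

lemma S_zero {g : ℤ} (hg : 3 ≤ g) : S g hg 0 = 0 := by
  rw [S]; simp

lemma S_eq {g : ℤ} (hg : 3 ≤ g) {n : ℤ} (hn : n ≠ 0) :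
    S g hg n = (bdig g n).natAbs + S g hg ((n - bdig g n) / g) := by
  rw [S, dif_neg hn]

/-- uniqueness of the balanced digit -/
lemma bdig_eq {g n ε : ℤ} (hg : 3 ≤ g) (hε : 2 * |ε| < g) (hdvd : g ∣ n - ε) :
    bdig g n = ε := by
  have h1 := bdig_bound hg n
  have h2 := dvd_sub_bdig hg n
  have h3 : g ∣ bdig g n - ε := by
    obtain ⟨a, ha⟩ := hdvd
    obtain ⟨b, hb⟩ := h2
    exact ⟨a - b, by rw [mul_sub]; linarith⟩
  have h4 : |bdig g n - ε| < g := by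
    have := abs_sub (bdig g n) ε
    omega
  have h5 : bdig g n - ε = 0 := Int.eq_zero_of_abs_lt_dvd h3 h4
  omega

/-- the key recursion -/
lemma S_digit {g : ℤ} (hg : 3 ≤ g) {ε : ℤ} (m : ℤ) (hε : 2 * |ε| < g) :
    S g hg (ε + g * m) = ε.natAbs + S g hg m := by
  rcases eq_or_ne (ε + g * m) 0 with h0 | h0
  · have hd : g ∣ ε := ⟨-m, by rw [mul_neg]; linarith⟩
    have hε0 : ε = 0 := Int.eq_zero_of_abs_lt_dvd hd (by omega)
    have hm0 : m = 0 := by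
      rcases mul_eq_zero.1 (show g * m = 0 by linarith) with h | h
      · omega
      · exact h
    rw [hε0, hm0]; simp [S_zero]
  · rw [S_eq hg h0]
    have hbd : bdig g (ε + g * m) = ε := bdig_eq hg hε ⟨m, by ring⟩
    rw [hbd]
    congr 1
    rw [show ε + g * m - ε = g * m by ring, Int.mul_ediv_cancel_left _ (by omega : g ≠ 0)]

end GlenAux

namespace GlenAux

/-- decomposition of any n into digit plus g times smaller number -/
lemma exists_decomp {g : ℤ} (hg : 3 ≤ g) (hodd : Odd g) (n : ℤ) :
    ∃ ε m : ℤ, 2 * |ε| < g ∧ n = ε + g * m ∧ S g hg n = ε.natAbs + S g hg m ∧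
      (n ≠ 0 → m.natAbs < n.natAbs) := by
  obtain ⟨t, ht⟩ := hodd
  have hb := bdig_bound hg n
  have hb' : 2 * |bdig g n| < g := by
    have h2 : 2 * |bdig g n| ≠ g := fun h => by omega
    omega
  obtain ⟨m, hm⟩ := dvd_sub_bdig hg n
  have hn : n = bdig g n + g * m := by linarith
  refine ⟨bdig g n, m, hb', hn, ?_, ?_⟩
  · nth_rewrite 1 [hn]
    exact S_digit hg m hb'
  · intro hn0
    exact shrink hg hn0 hb hm

/-- digit sum changes by at most 1 when adding ±1 -/
lemma S_add_unit {g : ℤ} (hg : 3 ≤ g) (hodd : Odd g) :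
    ∀ (N : ℕ) (n δ : ℤ), n.natAbs ≤ N → (δ = 1 ∨ δ = -1) →
      S g hg (n + δ) ≤ S g hg n + 1 := by
  obtain ⟨t, ht⟩ := hodd
  have ht1 : 1 ≤ t := by omega
  have hδpow : ∀ δ : ℤ, (δ = 1 ∨ δ = -1) → 2 * |δ| < g := by
    intro δ h; rcases h with rfl | rfl <;> simp <;> omega
  have hzero : ∀ δ : ℤ, (δ = 1 ∨ δ = -1) → S g hg (0 + δ) ≤ S g hg 0 + 1 := by
    intro δ hδ
    have : S g hg (0 + δ) = δ.natAbs + S g hg 0 := by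
      rw [show (0 + δ : ℤ) = δ + g * 0 by ring]
      exact S_digit hg 0 (hδpow δ hδ)
    rw [this, S_zero]
    rcases hδ with rfl | rfl <;> simp
  intro N
  induction N with
  | zero =>
    intro n δ hn hδ
    have hn0 : n = 0 := by omega
    subst hn0
    exact hzero δ hδ
  | succ N ih =>
    intro n δ hn hδ
    rcases eq_or_ne n 0 with rfl | hn0
    · exact hzero δ hδ
    · obtain ⟨ε, m, hε, hnm, hS, hlt⟩ := exists_decomp hg ⟨t, ht⟩ n
      have hmN : m.natAbs ≤ N := by have := hlt hn0; omega
      -- linearize the digit bound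
      have hεb : -t ≤ ε ∧ ε ≤ t := by
        constructor <;> rcases abs_cases ε with ⟨h1, _⟩ | ⟨h1, _⟩ <;> omega
      by_cases hcase : 2 * |ε + δ| < g
      · -- no carry
        have h1 : S g hg (n + δ) = (ε + δ).natAbs + S g hg m := by
          rw [show n + δ = (ε + δ) + g * m by rw [hnm]; ring]
          exact S_digit hg m hcase
        have h2 : (ε + δ).natAbs ≤ ε.natAbs + 1 := by
          rcases hδ with rfl | rfl <;> omega
        omega
      · -- carry
        have hcb : t + 1 ≤ ε + δ ∨ ε + δ ≤ -(t + 1) := by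
          rcases abs_cases (ε + δ) with ⟨h1, _⟩ | ⟨h1, _⟩ <;> [left; right] <;> omega
        have hεval : ε = δ * t := by
          rcases hδ with rfl | rfl <;> rcases hcb with h | h <;> omega
        have hε' : 2 * |(-δ * t : ℤ)| < g := by
          have habs : |(-δ * t : ℤ)| = t := by
            rcases hδ with rfl | rfl
            · rw [show (-(1:ℤ) * t) = -t by ring, abs_neg, abs_of_nonneg (by omega : (0:ℤ) ≤ t)]
            · rw [show (-(-1:ℤ) * t) = t by ring, abs_of_nonneg (by omega : (0:ℤ) ≤ t)]
          omega
        have h1 : S g hg (n + δ) = (-δ * t).natAbs + S g hg (m + δ) := by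
          rw [show n + δ = (-δ * t) + g * (m + δ) by rw [hnm, hεval, ht]; ring]
          exact S_digit hg (m + δ) hε'
        have h2 : S g hg (m + δ) ≤ S g hg m + 1 := ih m δ hmN hδ
        have h3 : (-δ * t : ℤ).natAbs = ε.natAbs := by
          rw [hεval]; rcases hδ with rfl | rfl <;> simp
        omega

/-- digit sum changes by at most 1 when adding ±gⁱ -/
lemma S_add_pow {g : ℤ} (hg : 3 ≤ g) (hodd : Odd g) :
    ∀ (i : ℕ) (n δ : ℤ), (δ = 1 ∨ δ = -1) →
      S g hg (n + δ * g ^ i) ≤ S g hg n + 1 := by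
  intro i
  induction i with
  | zero =>
    intro n δ hδ
    simpa using S_add_unit hg hodd n.natAbs n δ le_rfl hδ
  | succ i ih =>
    intro n δ hδ
    obtain ⟨ε, m, hε, hnm, hS, _⟩ := exists_decomp hg hodd n
    have h1 : S g hg (n + δ * g ^ (i + 1)) = ε.natAbs + S g hg (m + δ * g ^ i) := by
      rw [show n + δ * g ^ (i+1) = ε + g * (m + δ * g ^ i) by rw [hnm]; ring]
      exact S_digit hg _ hε
    have h2 := ih m δ hδ
    omega

end GlenAux

namespace GlenAux

/-- digit sum of a balanced expansion -/
lemma S_sum {g : ℤ} (hg : 3 ≤ g) :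
    ∀ (N : ℕ) (F : ℕ → ℤ), (∀ i, 2 * |F i| < g) →
      S g hg (∑ i ∈ Finset.range N, F i * g ^ i) = ∑ i ∈ Finset.range N, (F i).natAbs := by
  intro N
  induction N with
  | zero => simp [S_zero]
  | succ N ih =>
    intro F hF
    have h1 : ∑ i ∈ Finset.range (N + 1), F i * g ^ i
        = F 0 + g * ∑ i ∈ Finset.range N, F (i + 1) * g ^ i := by
      rw [Finset.sum_range_succ' (fun i => F i * g ^ i) N, Finset.mul_sum]
      simp only [pow_zero, mul_one]
      rw [add_comm]
      congr 1
      exact Finset.sum_congr rfl fun i _ => by ring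
    rw [h1, S_digit hg _ (hF 0), ih (fun i => F (i + 1)) (fun i => hF (i + 1))]
    rw [Finset.sum_range_succ' (fun i => (F i).natAbs) N]
    omega

/-- value of a signed power list -/
def lval (g : ℤ) (L : List (ℤ × ℕ)) : ℤ := (L.map fun p => p.1 * g ^ p.2).sum

lemma S_le_length {g : ℤ} (hg : 3 ≤ g) (hodd : Odd g) :
    ∀ L : List (ℤ × ℕ), (∀ p ∈ L, p.1 = 1 ∨ p.1 = -1) →
      S g hg (lval g L) ≤ L.length := by
  intro L
  induction L with
  | nil => intro _; simp [lval, S_zero]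
  | cons p L ih =>
    intro hv
    have h1 : lval g (p :: L) = lval g L + p.1 * g ^ p.2 := by
      simp [lval]; ring
    rw [h1]
    have h2 := S_add_pow hg hodd p.2 (lval g L) p.1 (hv p (by simp))
    have h3 := ih (fun q hq => hv q (by simp [hq]))
    simp only [List.length_cons]
    omega

/-- representation achieving the digit sum -/
lemma exists_list {g : ℤ} (hg : 3 ≤ g) (hodd : Odd g) :
    ∀ (N : ℕ) (n : ℤ), n.natAbs ≤ N →
      ∃ L : List (ℤ × ℕ), (∀ p ∈ L, p.1 = 1 ∨ p.1 = -1) ∧ L.length = S g hg n ∧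
        lval g L = n := by
  intro N
  induction N with
  | zero =>
    intro n hn
    have : n = 0 := by omega
    subst this
    exact ⟨[], by simp, by simp [lval, S_zero]⟩
  | succ N ih =>
    intro n hn
    rcases eq_or_ne n 0 with rfl | hn0
    · exact ⟨[], by simp, by simp [lval, S_zero]⟩
    · obtain ⟨ε, m, hε, hnm, hS, hlt⟩ := exists_decomp hg hodd n
      have hmN : m.natAbs ≤ N := by have := hlt hn0; omega
      obtain ⟨L, hLv, hLl, hLs⟩ := ih m hmN
      refine ⟨(L.map fun p => (p.1, p.2 + 1)) ++
        List.replicate ε.natAbs (if 0 ≤ ε then (1, 0) else (-1, 0)), ?_, ?_, ?_⟩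
      · intro p hp
        rcases List.mem_append.1 hp with h | h
        · obtain ⟨q, hq, rfl⟩ := List.mem_map.1 h
          exact hLv q hq
        · have := List.eq_of_mem_replicate h
          subst this
          split <;> simp
      · rw [List.length_append, List.length_map, List.length_replicate, hLl, hS]; omega
      · unfold lval
        rw [List.map_append, List.sum_append]
        have hrep : ((List.replicate ε.natAbs
            (if 0 ≤ ε then ((1:ℤ), (0:ℕ)) else (-1, 0))).map fun p => p.1 * g ^ p.2).sum
            = ε := by
          rw [List.map_replicate, List.sum_replicate]
          split <;>
            simp only [pow_zero, mul_one, one_mul, neg_mul, mul_neg, nsmul_eq_mul,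
              smul_eq_mul] <;> omega
        have hshift : ((L.map fun p => (p.1, p.2 + 1)).map fun p => p.1 * g ^ p.2).sum
            = g * lval g L := by
          rw [List.map_map]
          unfold lval
          rw [← List.sum_map_mul_left]
          congr 1
          refine List.map_congr_left fun p _ => ?_
          simp [Function.comp, pow_succ]
          ring
        rw [hrep, hshift, hLs]
        omega

/-- glen equals the digit sum function -/
lemma glen_eq_S {g : ℤ} (hg : 3 ≤ g) (hodd : Odd g) (n : ℤ) :
    sInf {k : ℕ | ∃ δ : Fin k → ℤ, ∃ e : Fin k → ℕ,
      (∀ j, δ j = 1 ∨ δ j = -1) ∧ n = ∑ j, δ j * g ^ (e j)} = S g hg n := by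
  set A := {k : ℕ | ∃ δ : Fin k → ℤ, ∃ e : Fin k → ℕ,
      (∀ j, δ j = 1 ∨ δ j = -1) ∧ n = ∑ j, δ j * g ^ (e j)} with hA
  obtain ⟨L, hLv, hLl, hLs⟩ := exists_list hg hodd n.natAbs n le_rfl
  have hmem : S g hg n ∈ A := by
    rw [hA, ← hLl]
    refine ⟨fun j => (L.get j).1, fun j => (L.get j).2, fun j => hLv _ (L.get_mem j), ?_⟩
    rw [← hLs]
    unfold lval
    conv_lhs => rw [← List.ofFn_get L]
    rw [List.map_ofFn, List.sum_ofFn]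
    rfl
  apply le_antisymm
  · exact Nat.sInf_le hmem
  · refine le_csInf ⟨_, hmem⟩ fun k hk => ?_
    obtain ⟨δ, e, hδ, hsum⟩ := hk
    have : lval g (List.ofFn fun j => (δ j, e j)) = n := by
      unfold lval
      rw [List.map_ofFn, List.sum_ofFn, hsum]
      rfl
    have h := S_le_length hg hodd (List.ofFn fun j => (δ j, e j)) ?_
    · rw [this] at h
      simpa using h
    · intro p hp
      obtain ⟨j, rfl⟩ := List.mem_ofFn.1 hp
      exact hδ j

end GlenAux


/-- For odd g ≥ 3, the g-length of n is the sum of the absolute values of the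
digits of its unique g-adic representation. -/
theorem glen_eq_digit_sum_odd (g : ℤ) (hg : 3 ≤ g) (hodd : Odd g) (n : ℤ)
    (f : ℕ →₀ ℤ)
    (hbound : ∀ i, |f i| ≤ (g - 1) / 2)
    (hsum : n = f.sum (fun i c => c * g ^ i)) :
    (glen g n : ℤ) = f.sum (fun _ c => |c|) := by
  obtain ⟨N, hN⟩ := Finset.exists_nat_subset_range f.support
  have hF : ∀ i, 2 * |f i| < g := by
    intro i
    have hb := hbound i
    obtain ⟨t, ht⟩ := hodd
    have h2 : (g - 1) / 2 = t := by omega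
    omega
  have hn : n = ∑ i ∈ Finset.range N, f i * g ^ i := by
    rw [hsum, Finsupp.sum_of_support_subset f hN _ (fun i _ => by simp)]
  have hS := GlenAux.S_sum hg N (fun i => f i) hF
  have hglen : glen g n = GlenAux.S g hg n := GlenAux.glen_eq_S hg hodd n
  rw [hglen, hn, hS]
  rw [Finsupp.sum_of_support_subset f hN (fun _ c => |c|) (fun i _ => by simp)]
  push_cast [Int.natCast_natAbs]
  rfl
end

section
/- Let g ≥ 2 be even and let n = Σ_{i≥0} ε_i g^i be the unique representation with digits |ε_i| ≤ g/2, finite support, and the condition that |ε_i| = g/2 implies |ε_{i+1}| < g/2 and ε_i ε_{i+1} ≥ 0. Then ℓ_g(n) = Σ_{i≥0} |ε_i|, where ℓ_g(n) is the minimal number of terms ±g^i needed to write n. -/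
namespace GlenAux

variable (h : ℤ)

def val : List ℤ → ℤ
  | [] => 0
  | d :: t => d + 2 * h * val t

def dig (l : List ℤ) (i : ℕ) : ℤ := l.getD i 0

def Canon (l : List ℤ) : Prop :=
  (∀ i, |dig l i| ≤ h) ∧
    ∀ i, |dig l i| = h → |dig l (i + 1)| < h ∧ 0 ≤ dig l i * dig l (i + 1)

def dsum (l : List ℤ) : ℕ := (l.map Int.natAbs).sum

@[simp] lemma dig_nil (i : ℕ) : dig [] i = 0 := by cases i <;> rfl

@[simp] lemma dig_cons_zero (d : ℤ) (t : List ℤ) : dig (d :: t) 0 = d := rfl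

@[simp] lemma dig_cons_succ (d : ℤ) (t : List ℤ) (i : ℕ) :
    dig (d :: t) (i + 1) = dig t i := rfl

lemma dig_tail (l : List ℤ) (i : ℕ) : dig l.tail i = dig l (i + 1) := by
  cases l <;> simp

@[simp] lemma val_nil : val h [] = 0 := rfl

@[simp] lemma val_cons (d : ℤ) (t : List ℤ) : val h (d :: t) = d + 2 * h * val h t := rfl

lemma val_eq (l : List ℤ) : val h l = dig l 0 + 2 * h * val h l.tail := by
  cases l <;> simp

@[simp] lemma dsum_nil : dsum [] = 0 := rfl

@[simp] lemma dsum_cons (d : ℤ) (t : List ℤ) : dsum (d :: t) = d.natAbs + dsum t := rfl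

lemma dsum_eq (l : List ℤ) : dsum l = (dig l 0).natAbs + dsum l.tail := by
  cases l <;> simp

lemma canon_nil (hh : 1 ≤ h) : Canon h [] := by
  constructor
  · intro i; simp; omega
  · intro i hi; simp at hi; omega

lemma canon_cons_iff (d : ℤ) (t : List ℤ) :
    Canon h (d :: t) ↔
      Canon h t ∧ |d| ≤ h ∧ (|d| = h → |dig t 0| < h ∧ 0 ≤ d * dig t 0) := by
  constructor
  · rintro ⟨h1, h2⟩
    refine ⟨⟨fun i => h1 (i + 1), fun i => h2 (i + 1)⟩, h1 0, h2 0⟩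
  · rintro ⟨⟨h1, h2⟩, hd, htie⟩
    refine ⟨fun i => ?_, fun i => ?_⟩
    · cases i with
      | zero => exact hd
      | succ j => exact h1 j
    · cases i with
      | zero => exact htie
      | succ j => exact h2 j

lemma canon_tail {l : List ℤ} (hc : Canon h l) : Canon h l.tail := by
  cases l with
  | nil => exact hc
  | cons d t => exact ((canon_cons_iff h d t).mp hc).1


lemma val_neg (l : List ℤ) : val h (l.map Neg.neg) = -val h l := by
  induction l with
  | nil => simp
  | cons d t ih => simp [ih]; ring

lemma dig_neg (l : List ℤ) (i : ℕ) : dig (l.map Neg.neg) i = -dig l i := by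
  induction l generalizing i with
  | nil => simp
  | cons d t ih => cases i with
    | zero => simp
    | succ j => simpa using ih j

lemma dsum_neg (l : List ℤ) : dsum (l.map Neg.neg) = dsum l := by
  induction l with
  | nil => rfl
  | cons d t ih => simp [dsum, List.map_map] at ih ⊢; omega

lemma canon_neg {l : List ℤ} (hc : Canon h l) : Canon h (l.map Neg.neg) := by
  obtain ⟨h1, h2⟩ := hc
  constructor
  · intro i; rw [dig_neg, abs_neg]; exact h1 i
  · intro i hi
    rw [dig_neg, abs_neg] at hi
    obtain ⟨ha, hb⟩ := h2 i hi
    rw [dig_neg, dig_neg, abs_neg]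
    exact ⟨ha, by nlinarith⟩

lemma val_sub_dig (l : List ℤ) : (2 * h) ∣ (val h l - dig l 0) := by
  rw [val_eq h l]; simp

lemma dig_bdd {l : List ℤ} (hc : Canon h l) (i : ℕ) : |dig l i| ≤ h := hc.1 i

/-- canonical value 0 forces all digits 0 -/
lemma dig_zero (hh : 1 ≤ h) : ∀ l : List ℤ, Canon h l → val h l = 0 → ∀ i, dig l i = 0 := by
  intro l
  induction l with
  | nil => intro _ _ i; simp
  | cons d t ih =>
    intro hc hv i
    rw [canon_cons_iff] at hc
    obtain ⟨hct, hd, -⟩ := hc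
    simp at hv
    have hdvd : (2 * h) ∣ d := ⟨-val h t, by linarith⟩
    have hd0 : d = 0 := by
      rcases hdvd with ⟨k, hk⟩
      rcases lt_trichotomy k 0 with hk' | hk' | hk'
      · exfalso; nlinarith [abs_le.mp hd]
      · simp [hk, hk']
      · exfalso; nlinarith [abs_le.mp hd]
    have hvt : val h t = 0 := by
      have : 2 * h * val h t = 0 := by omega
      have h2 : (2 * h) ≠ 0 := by omega
      exact by
        rcases mul_eq_zero.mp this with h' | h'
        · omega
        · exact h'
    cases i with
    | zero => simpa using hd0
    | succ j => simpa using ih hct hvt j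


lemma tie_contra (hh : 1 ≤ h) {a b : List ℤ} (ha : Canon h a) (hb : Canon h b)
    (hv : val h a = val h b) (h0 : dig a 0 = h) (h0' : dig b 0 = -h) : False := by
  have ha1 := (ha.2 0 (by rw [h0]; exact abs_of_pos (by omega))).2
  have ha1' := (ha.2 0 (by rw [h0]; exact abs_of_pos (by omega))).1
  have hb1 := (hb.2 0 (by rw [h0']; rw [abs_neg]; exact abs_of_pos (by omega))).2
  have hb1' := (hb.2 0 (by rw [h0']; rw [abs_neg]; exact abs_of_pos (by omega))).1
  rw [h0] at ha1; rw [h0'] at hb1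
  -- digits at index 1
  set a1 := dig a 1 with ha1def
  set b1 := dig b 1 with hb1def
  have hA : 0 ≤ a1 := by nlinarith
  have hB : b1 ≤ 0 := by nlinarith
  have hAlt : a1 < h := by rw [abs_lt] at ha1'; exact ha1'.2
  have hBlt : -h < b1 := by rw [abs_lt] at hb1'; exact hb1'.1
  -- values of tails
  have hva := val_eq h a
  have hvb := val_eq h b
  have hda : (2*h) ∣ (val h a.tail - a1) := by
    rw [ha1def, ← dig_tail]; exact val_sub_dig h _
  have hdb : (2*h) ∣ (val h b.tail - b1) := by
    rw [hb1def, ← dig_tail]; exact val_sub_dig h _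
  -- val a = h + 2h * A, val b = -h + 2h * B
  have key : 2 * h * (val h b.tail - val h a.tail) = 2 * h := by
    rw [h0] at hva; rw [h0'] at hvb; nlinarith [hva, hvb, hv]
  have hBA : val h b.tail - val h a.tail = 1 := by
    have h2 : (2*h) ≠ 0 := by omega
    have := mul_left_cancel₀ h2 (key.trans (mul_one (2*h)).symm)
    linarith
  obtain ⟨p, hp⟩ := hda
  obtain ⟨q, hq⟩ := hdb
  have hthis : a1 + 1 - b1 = 2 * h * (q - p) := by linear_combination hq - hp - hBA
  have hlb : 1 ≤ a1 + 1 - b1 := by omega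
  have hub : a1 + 1 - b1 ≤ 2*h - 1 := by omega
  rcases le_or_gt (q - p) 0 with hk | hk
  · nlinarith
  · nlinarith

lemma digits_unique (hh : 1 ≤ h) :
    ∀ l l' : List ℤ, Canon h l → Canon h l' → val h l = val h l' →
      ∀ i, dig l i = dig l' i := by
  intro l
  induction l with
  | nil =>
    intro l' _ hc' hv i
    rw [dig_nil]
    exact (dig_zero h hh l' hc' (by simpa using hv.symm) i).symm
  | cons d t ih =>
    intro l' hc hc' hv i
    have hd : |d| ≤ h := hc.1 0
    have hd' : |dig l' 0| ≤ h := hc'.1 0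
    have hdvd : (2*h) ∣ (d - dig l' 0) := by
      have h1 : (2*h) ∣ (val h l' - d) := by
        have := val_sub_dig h (d :: t); rw [hv] at this; simpa using this
      have h2 := val_sub_dig h l'
      have h3 : (val h l' - dig l' 0) - (val h l' - d) = d - dig l' 0 := by ring
      exact h3 ▸ dvd_sub h2 h1
    have hd0 : d = dig l' 0 := by
      obtain ⟨k, hk⟩ := hdvd
      rcases lt_trichotomy k 0 with hk' | hk' | hk'
      · -- d - dig l' 0 = 2hk ≤ -2h forces d = -h, dig l' 0 = h
        have hk1 : k ≤ -1 := by omega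
        have habs := abs_le.mp hd
        have habs' := abs_le.mp hd'
        have : d = -h ∧ dig l' 0 = h := by constructor <;> nlinarith
        exact (tie_contra h hh hc' hc hv.symm this.2 (by simpa using this.1)).elim
      · rw [hk', mul_zero] at hk; omega
      · have hk1 : 1 ≤ k := by omega
        have habs := abs_le.mp hd
        have habs' := abs_le.mp hd'
        have : d = h ∧ dig l' 0 = -h := by constructor <;> nlinarith
        exact (tie_contra h hh hc hc' hv (by simpa using this.1) this.2).elim
    have hvt : val h t = val h l'.tail := by
      have e2 := val_eq h l'
      have h2 : (2*h) ≠ 0 := by omega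
      apply mul_left_cancel₀ h2
      have e1 : d + 2 * h * val h t = val h l' := by simpa using hv
      linarith
    have htails := ih l'.tail (canon_tail h hc) (canon_tail h hc') hvt
    cases i with
    | zero => simpa using hd0
    | succ j => rw [dig_cons_succ, ← dig_tail l' j]; exact htails j

lemma dig_eq_zero_of_le {l : List ℤ} {i : ℕ} (hi : l.length ≤ i) : dig l i = 0 := by
  unfold dig
  rw [List.getD_eq_default]
  exact hi

lemma dsum_eq_range (l : List ℤ) : ∀ M, l.length ≤ M →
    dsum l = ∑ i ∈ Finset.range M, (dig l i).natAbs := by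
  induction l with
  | nil => intro M _; simp
  | cons d t ih =>
    intro M hM
    cases M with
    | zero => simp at hM
    | succ M' =>
      rw [Finset.sum_range_succ']
      simp only [dig_cons_succ, dig_cons_zero, dsum_cons]
      rw [ih M' (by simpa using hM)]
      omega

lemma dsum_unique (hh : 1 ≤ h) {l l' : List ℤ} (hc : Canon h l) (hc' : Canon h l')
    (hv : val h l = val h l') : dsum l = dsum l' := by
  have hdig := digits_unique h hh l l' hc hc' hv
  rw [dsum_eq_range l (max l.length l'.length) (le_max_left _ _),
      dsum_eq_range l' (max l.length l'.length) (le_max_right _ _)]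
  exact Finset.sum_congr rfl fun i _ => by rw [hdig i]


lemma exists_canon_nonneg (hh : 1 ≤ h) :
    ∀ n : ℤ, 0 ≤ n → ∃ l, Canon h l ∧ val h l = n := by
  suffices H : ∀ k : ℕ, ∀ n : ℤ, 0 ≤ n → n.natAbs = k → ∃ l, Canon h l ∧ val h l = n by
    intro n hn; exact H n.natAbs n hn rfl
  intro k
  induction k using Nat.strong_induction_on with
  | _ k IH =>
    intro n hn hk
    rcases eq_or_lt_of_le hn with hn0 | hn0
    · exact ⟨[], canon_nil h hh, by simp [← hn0]⟩
    have hgpos : (0:ℤ) < 2 * h := by omega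
    set r0 := n % (2 * h) with hr0
    have hr0nn : 0 ≤ r0 := Int.emod_nonneg n (by omega)
    have hr0lt : r0 < 2 * h := Int.emod_lt_of_pos n hgpos
    have hdiv : 2 * h * (n / (2 * h)) + r0 = n := Int.mul_ediv_add_emod n (2 * h)
    set q0 := n / (2 * h) with hq0
    have hq0nn : 0 ≤ q0 := Int.ediv_nonneg hn (by omega)
    rcases lt_trichotomy r0 h with hcase | hcase | hcase
    · -- small residue
      have hqlt : q0 < n := by nlinarith
      obtain ⟨lq, hclq, hvlq⟩ := IH q0.natAbs (by omega) q0 hq0nn rfl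
      refine ⟨r0 :: lq, ?_, by rw [val_cons, hvlq]; linarith⟩
      rw [canon_cons_iff]
      refine ⟨hclq, abs_le.mpr ⟨by omega, by omega⟩, fun habs => ?_⟩
      rw [abs_of_nonneg hr0nn] at habs; omega
    · -- r0 = h : tie case
      have hq0lt : q0 < n := by nlinarith
      obtain ⟨lq, hclq, hvlq⟩ := IH q0.natAbs (by omega) q0 hq0nn rfl
      set e := dig lq 0 with he
      have hebdd := abs_le.mp (hclq.1 0)
      rw [← he] at hebdd
      by_cases hgood : 0 ≤ e ∧ e < h
      · refine ⟨h :: lq, ?_, by rw [val_cons, hvlq]; linarith⟩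
        rw [canon_cons_iff]
        refine ⟨hclq, by rw [abs_of_nonneg (by omega)], fun _ => ⟨?_, ?_⟩⟩
        · rw [← he, abs_lt]; omega
        · rw [← he]; exact mul_nonneg (by omega) hgood.1
      · -- e < 0 or e = h; use -h and q0+1
        have hq1 : 1 ≤ q0 := by
          rcases eq_or_lt_of_le hq0nn with h0 | h0
          · exfalso
            have hz := dig_zero h hh lq hclq (by omega) 0
            rw [← he] at hz
            omega
          · omega
        have hq1lt : q0 + 1 < n := by nlinarith
        obtain ⟨lq', hclq', hvlq'⟩ := IH (q0+1).natAbs (by omega) (q0+1) (by omega) rfl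
        set e' := dig lq' 0 with he'
        have he'bdd := abs_le.mp (hclq'.1 0)
        rw [← he'] at he'bdd
        have hd1 : (2*h) ∣ (q0 - e) := by rw [← hvlq, he]; exact val_sub_dig h lq
        have hd2 : (2*h) ∣ (q0 + 1 - e') := by rw [← hvlq', he']; exact val_sub_dig h lq'
        have hd3 : (2*h) ∣ (e + 1 - e') := by
          have harith : (e + 1 - e') = (q0 + 1 - e') - (q0 - e) := by ring
          rw [harith]; exact dvd_sub hd2 hd1
        have he'det : e' ≤ 0 ∧ -h < e' := by
          obtain ⟨c, hcc⟩ := hd3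
          rcases not_and_or.mp hgood with hneg | hge
          · -- e < 0
            have hneg' : e < 0 := by omega
            have hc0 : c = 0 := by
              rcases le_or_gt c (-1) with hcl | hcl
              · exfalso; nlinarith
              rcases le_or_gt 1 c with hcg | hcg
              · exfalso; nlinarith
              omega
            rw [hc0, mul_zero] at hcc
            omega
          · -- e = h
            have heh : e = h := by push_neg at hge; omega
            have hc1 : c = 1 := by
              rcases le_or_gt c 0 with hcl | hcl
              · exfalso; nlinarith
              rcases le_or_gt 2 c with hcg | hcg
              · exfalso; nlinarith
              omega
            rw [hc1, mul_one] at hcc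
            omega
        refine ⟨(-h) :: lq', ?_, by rw [val_cons, hvlq']; linarith⟩
        rw [canon_cons_iff]
        refine ⟨hclq', by rw [abs_neg, abs_of_nonneg (by omega)], fun _ => ⟨?_, ?_⟩⟩
        · rw [← he', abs_lt]; omega
        · rw [← he']; nlinarith [he'det.1]
    · -- large residue: r = r0 - 2h, q = q0 + 1
      have hq1lt : q0 + 1 < n := by nlinarith
      obtain ⟨lq, hclq, hvlq⟩ := IH (q0+1).natAbs (by omega) (q0+1) (by omega) rfl
      refine ⟨(r0 - 2*h) :: lq, ?_, by rw [val_cons, hvlq]; linarith⟩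
      rw [canon_cons_iff]
      refine ⟨hclq, abs_le.mpr ⟨by omega, by omega⟩, fun habs => ?_⟩
      rw [abs_of_nonpos (by omega)] at habs; omega

lemma exists_canon (hh : 1 ≤ h) (n : ℤ) : ∃ l, Canon h l ∧ val h l = n := by
  rcases le_or_gt 0 n with hn | hn
  · exact exists_canon_nonneg h hh n hn
  · obtain ⟨l, hc, hv⟩ := exists_canon_nonneg h hh (-n) (by omega)
    exact ⟨l.map Neg.neg, canon_neg h hc, by rw [val_neg, hv]; ring⟩


open Classical in
noncomputable def crep (n : ℤ) : List ℤ :=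
  if hc : ∃ l, Canon h l ∧ val h l = n then hc.choose else []

noncomputable def D (n : ℤ) : ℕ := dsum (crep h n)

lemma crep_spec (hh : 1 ≤ h) (n : ℤ) : Canon h (crep h n) ∧ val h (crep h n) = n := by
  have hex := exists_canon h hh n
  unfold crep
  rw [dif_pos hex]
  exact hex.choose_spec

lemma D_eq (hh : 1 ≤ h) {l : List ℤ} (hc : Canon h l) : D h (val h l) = dsum l := by
  obtain ⟨hc', hv'⟩ := crep_spec h hh (val h l)
  exact dsum_unique h hh hc' hc hv'

lemma D_zero (hh : 1 ≤ h) : D h 0 = 0 := by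
  have := D_eq h hh (canon_nil h hh)
  simpa using this

lemma D_neg (hh : 1 ≤ h) (n : ℤ) : D h (-n) = D h n := by
  obtain ⟨hc, hv⟩ := crep_spec h hh n
  have h1 : D h (-n) = dsum ((crep h n).map Neg.neg) := by
    have h2 := D_eq h hh (canon_neg h hc)
    rw [val_neg, hv] at h2
    exact h2
  rw [h1, dsum_neg]; rfl

/-- adding 1 to a canonically represented value -/
lemma lip (hh : 1 ≤ h) :
    ∀ l : List ℤ, Canon h l → ∃ l', Canon h l' ∧ val h l' = val h l + 1 ∧
      dsum l' ≤ dsum l + 1 := by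
  suffices H : ∀ k : ℕ, ∀ l : List ℤ, l.length ≤ k → Canon h l →
      ∃ l', Canon h l' ∧ val h l' = val h l + 1 ∧ dsum l' ≤ dsum l + 1 by
    intro l hc; exact H l.length l le_rfl hc
  intro k
  induction k using Nat.strong_induction_on with
  | _ k IH =>
    intro l hlen hc
    cases l with
    | nil =>
      refine ⟨[1], ?_, by simp, by simp [dsum]⟩
      rw [canon_cons_iff]
      refine ⟨canon_nil h hh, by rw [abs_one]; omega, fun _ => ⟨?_, ?_⟩⟩
      · rw [dig_nil, abs_zero]; omega
      · rw [dig_nil]; simp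
    | cons d t =>
      rw [canon_cons_iff] at hc
      obtain ⟨hct, hd, htie⟩ := hc
      have hd' := abs_le.mp hd
      rcases le_or_gt d (h - 2) with hda | hdb
      · -- case (a): d ≤ h - 2
        refine ⟨(d+1) :: t, ?_, by simp; ring, ?_⟩
        · rw [canon_cons_iff]
          refine ⟨hct, abs_le.mpr ⟨by omega, by omega⟩, fun habs => ?_⟩
          exfalso
          rcases abs_cases (d+1) with ⟨h1, _⟩ | ⟨h1, _⟩ <;> omega
        · simp only [dsum_cons]; omega
      rcases eq_or_lt_of_le (by omega : d ≤ h) with hdh | hdh'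
      · -- case (c): d = h
        obtain ⟨l', hcl', hvl', hsl'⟩ := IH t.length (by simp at hlen; omega) t le_rfl hct
        refine ⟨(-h+1) :: l', ?_, ?_, ?_⟩
        · rw [canon_cons_iff]
          refine ⟨hcl', abs_le.mpr ⟨by omega, by omega⟩, fun habs => ?_⟩
          exfalso
          rcases abs_cases (-h+1) with ⟨h1, _⟩ | ⟨h1, _⟩ <;> omega
        · rw [val_cons, hvl', val_cons, hdh]; ring
        · simp only [dsum_cons]; omega
      -- case (b): d = h - 1
      have hdb' : d = h - 1 := by omega
      have hebdd' := abs_le.mp (hct.1 0)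
      rcases lt_trichotomy (dig t 0) 0 with heneg | hezero | hepos
      · -- (b2) e < 0 : t = e :: t₂
        cases t with
        | nil => rw [dig_nil] at heneg; omega
        | cons e₀ t₂ =>
          rw [dig_cons_zero] at heneg hebdd'
          rw [canon_cons_iff] at hct
          obtain ⟨hct2, -, -⟩ := hct
          refine ⟨(-h) :: (e₀+1) :: t₂, ?_, ?_, ?_⟩
          · rw [canon_cons_iff, canon_cons_iff]
            refine ⟨⟨hct2, abs_le.mpr ⟨by omega, by omega⟩, fun habs => ?_⟩,
              by rw [abs_neg, abs_of_nonneg (by omega)], fun _ => ⟨?_, ?_⟩⟩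
            · exfalso
              rcases abs_cases (e₀+1) with ⟨h1, _⟩ | ⟨h1, _⟩ <;> omega
            · rw [dig_cons_zero, abs_lt]; omega
            · rw [dig_cons_zero]; nlinarith
          · simp only [val_cons]; rw [hdb']; ring
          · simp only [dsum_cons]; omega
      · -- e = 0
        refine ⟨h :: t, ?_, by simp [hdb']; ring, ?_⟩
        · rw [canon_cons_iff]
          refine ⟨hct, by rw [abs_of_nonneg (by omega)], fun _ => ⟨?_, ?_⟩⟩
          · rw [hezero, abs_zero]; omega
          · rw [hezero]; simp
        · simp only [dsum_cons]; omega
      rcases lt_or_eq_of_le (by omega : dig t 0 ≤ h) with helth | heeqh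
      · -- (b1) 0 < e < h
        refine ⟨h :: t, ?_, by simp [hdb']; ring, ?_⟩
        · rw [canon_cons_iff]
          refine ⟨hct, by rw [abs_of_nonneg (by omega)], fun _ => ⟨?_, ?_⟩⟩
          · rw [abs_lt]; omega
          · exact mul_nonneg (by omega) (by omega)
        · simp only [dsum_cons]; omega
      · -- (b3) e = h : t = h :: t₂
        cases t with
        | nil => rw [dig_nil] at hepos; omega
        | cons e₀ t₂ =>
          rw [dig_cons_zero] at hepos hebdd' heeqh
          rw [canon_cons_iff] at hct
          obtain ⟨hct2, -, -⟩ := hct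
          obtain ⟨l', hcl', hvl', hsl'⟩ := IH t₂.length (by simp at hlen; omega) t₂ le_rfl hct2
          refine ⟨(-h) :: (-h+1) :: l', ?_, ?_, ?_⟩
          · rw [canon_cons_iff, canon_cons_iff]
            refine ⟨⟨hcl', abs_le.mpr ⟨by omega, by omega⟩, fun habs => ?_⟩,
              by rw [abs_neg, abs_of_nonneg (by omega)], fun _ => ⟨?_, ?_⟩⟩
            · exfalso
              rcases abs_cases (-h+1) with ⟨h1, _⟩ | ⟨h1, _⟩ <;> omega
            · rw [dig_cons_zero, abs_lt]; omega
            · rw [dig_cons_zero]; nlinarith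
          · simp only [val_cons]; rw [hvl', hdb', ← heeqh]; ring
          · simp only [dsum_cons]; omega


lemma lip_neg (hh : 1 ≤ h) (l : List ℤ) (hc : Canon h l) :
    ∃ l', Canon h l' ∧ val h l' = val h l - 1 ∧ dsum l' ≤ dsum l + 1 := by
  obtain ⟨m, hcm, hvm, hsm⟩ := lip h hh (l.map Neg.neg) (canon_neg h hc)
  refine ⟨m.map Neg.neg, canon_neg h hcm, ?_, ?_⟩
  · rw [val_neg, hvm, val_neg]; ring
  · rw [dsum_neg]; rwa [dsum_neg] at hsm

/-- key lemma: prepending a digit r with |r| ≤ h costs at most |r| -/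
lemma keyK (hh : 1 ≤ h) :
    ∀ t : List ℤ, Canon h t → ∀ r : ℤ, |r| ≤ h →
      ∃ l', Canon h l' ∧ val h l' = r + 2 * h * val h t ∧
        dsum l' ≤ r.natAbs + dsum t := by
  -- first prove for r = h
  have Hpos : ∀ t : List ℤ, Canon h t →
      ∃ l', Canon h l' ∧ val h l' = h + 2 * h * val h t ∧
        dsum l' ≤ h.natAbs + dsum t := by
    intro t hct
    have hebdd' := abs_le.mp (hct.1 0)
    rcases lt_trichotomy (dig t 0) 0 with heneg | hezero | hepos
    · -- e < 0
      cases t with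
      | nil => rw [dig_nil] at heneg; omega
      | cons e₀ t₂ =>
        rw [dig_cons_zero] at heneg hebdd'
        rw [canon_cons_iff] at hct
        obtain ⟨hct2, -, -⟩ := hct
        refine ⟨(-h) :: (e₀+1) :: t₂, ?_, ?_, ?_⟩
        · rw [canon_cons_iff, canon_cons_iff]
          refine ⟨⟨hct2, abs_le.mpr ⟨by omega, by omega⟩, fun habs => ?_⟩,
            by rw [abs_neg, abs_of_nonneg (by omega)], fun _ => ⟨?_, ?_⟩⟩
          · exfalso
            rcases abs_cases (e₀+1) with ⟨h1, _⟩ | ⟨h1, _⟩ <;> omega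
          · rw [dig_cons_zero, abs_lt]; omega
          · rw [dig_cons_zero]; nlinarith
        · simp only [val_cons]; ring
        · simp only [dsum_cons]; omega
    · -- e = 0
      refine ⟨h :: t, ?_, by simp, by simp only [dsum_cons]; omega⟩
      rw [canon_cons_iff]
      refine ⟨hct, by rw [abs_of_nonneg (by omega)], fun _ => ⟨?_, ?_⟩⟩
      · rw [hezero, abs_zero]; omega
      · rw [hezero]; simp
    rcases lt_or_eq_of_le (by omega : dig t 0 ≤ h) with helth | heeqh
    · -- 0 < e < h
      refine ⟨h :: t, ?_, by simp, by simp only [dsum_cons]; omega⟩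
      rw [canon_cons_iff]
      refine ⟨hct, by rw [abs_of_nonneg (by omega)], fun _ => ⟨?_, ?_⟩⟩
      · rw [abs_lt]; omega
      · exact mul_nonneg (by omega) (by omega)
    · -- e = h
      cases t with
      | nil => rw [dig_nil] at hepos; omega
      | cons e₀ t₂ =>
        rw [dig_cons_zero] at hepos hebdd' heeqh
        rw [canon_cons_iff] at hct
        obtain ⟨hct2, -, -⟩ := hct
        obtain ⟨l', hcl', hvl', hsl'⟩ := lip h hh t₂ hct2
        refine ⟨(-h) :: (-h+1) :: l', ?_, ?_, ?_⟩
        · rw [canon_cons_iff, canon_cons_iff]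
          refine ⟨⟨hcl', abs_le.mpr ⟨by omega, by omega⟩, fun habs => ?_⟩,
            by rw [abs_neg, abs_of_nonneg (by omega)], fun _ => ⟨?_, ?_⟩⟩
          · exfalso
            rcases abs_cases (-h+1) with ⟨h1, _⟩ | ⟨h1, _⟩ <;> omega
          · rw [dig_cons_zero, abs_lt]; omega
          · rw [dig_cons_zero]; nlinarith
        · simp only [val_cons]; rw [hvl', ← heeqh]; ring
        · simp only [dsum_cons]; omega
  intro t hct r hr
  have hr' := abs_le.mp hr
  rcases lt_trichotomy |r| h with hlt | heq | hgt
  · -- |r| < h : direct cons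
    refine ⟨r :: t, ?_, by simp, by simp only [dsum_cons]; omega⟩
    rw [canon_cons_iff]
    exact ⟨hct, hr, fun habs => absurd habs (by omega)⟩
  · rcases abs_eq (by omega : (0:ℤ) ≤ h) |>.mp heq with hrh | hrnh
    · subst hrh; exact Hpos t hct
    · -- r = -h : negate
      obtain ⟨l', hcl', hvl', hsl'⟩ := Hpos (t.map Neg.neg) (canon_neg h hct)
      refine ⟨l'.map Neg.neg, canon_neg h hcl', ?_, ?_⟩
      · rw [val_neg, hvl', val_neg, hrnh]; ring
      · rw [dsum_neg]
        rw [dsum_neg] at hsl'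
        have hna : r.natAbs = h.natAbs := by rw [hrnh]; omega
        omega
  · omega

lemma step (hh : 1 ≤ h) (c : ℤ) (hc : c = 1 ∨ c = -1) :
    ∀ e : ℕ, ∀ n : ℤ, D h (n + c * (2*h) ^ e) ≤ D h n + 1 := by
  intro e
  induction e with
  | zero =>
    intro n
    obtain ⟨hcn, hvn⟩ := crep_spec h hh n
    rcases hc with hc1 | hc1 <;> subst hc1
    · obtain ⟨l', hcl', hvl', hsl'⟩ := lip h hh _ hcn
      rw [hvn] at hvl'
      have := D_eq h hh hcl'
      rw [hvl'] at this
      simp only [pow_zero, mul_one]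
      rw [this]
      have hDn : D h n = dsum (crep h n) := rfl
      omega
    · obtain ⟨l', hcl', hvl', hsl'⟩ := lip_neg h hh _ hcn
      rw [hvn] at hvl'
      have := D_eq h hh hcl'
      rw [hvl'] at this
      simp only [pow_zero, mul_one]
      have hgoal : n + -1 = n - 1 := by ring
      rw [hgoal, this]
      have hDn : D h n = dsum (crep h n) := rfl
      omega
  | succ e ih =>
    intro n
    obtain ⟨hcn, hvn⟩ := crep_spec h hh n
    set l := crep h n with hl
    have hct : Canon h l.tail := canon_tail h hcn
    have hd0 : |dig l 0| ≤ h := hcn.1 0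
    obtain ⟨hcu, hvu⟩ := crep_spec h hh (val h l.tail + c * (2*h) ^ e)
    obtain ⟨l', hcl', hvl', hsl'⟩ := keyK h hh _ hcu (dig l 0) hd0
    have hval : val h l' = n + c * (2*h)^(e+1) := by
      rw [hvl', hvu, ← hvn, val_eq h l]; ring
    have hDval := D_eq h hh hcl'
    rw [hval] at hDval
    rw [hDval]
    have h1 : dsum (crep h (val h l.tail + c * (2*h) ^ e)) = D h (val h l.tail + c * (2*h)^e) := rfl
    have h2 := ih (val h l.tail)
    have h3 : D h (val h l.tail) = dsum l.tail := D_eq h hh hct ▸ by rw [D_eq h hh hct]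
    have h4 : D h n = dsum l := rfl
    rw [dsum_eq] at h4
    omega

lemma lower (hh : 1 ≤ h) :
    ∀ k : ℕ, ∀ δ : Fin k → ℤ, ∀ e : Fin k → ℕ,
      (∀ j, δ j = 1 ∨ δ j = -1) →
      D h (∑ j, δ j * (2*h) ^ (e j)) ≤ k := by
  intro k
  induction k with
  | zero => intro δ e _; simp [D_zero h hh]
  | succ k ih =>
    intro δ e hδ
    rw [Fin.sum_univ_castSucc]
    have := step h hh (δ (Fin.last k)) (hδ _) (e (Fin.last k))
      (∑ j : Fin k, δ j.castSucc * (2*h) ^ (e j.castSucc))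
    have h2 : D h (∑ j : Fin k, δ j.castSucc * (2*h) ^ (e j.castSucc)) ≤ k :=
      ih (fun j => δ j.castSucc) (fun j => e j.castSucc) (fun j => hδ _)
    omega


def terms : List ℤ → ℕ → List (ℤ × ℕ)
  | [], _ => []
  | d :: t, i => List.replicate d.natAbs ((if 0 ≤ d then 1 else -1), i) ++ terms t (i+1)

lemma terms_length : ∀ (l : List ℤ) (i : ℕ), (terms l i).length = dsum l := by
  intro l
  induction l with
  | nil => intro i; rfl
  | cons d t ih =>
    intro i
    simp [terms, ih, dsum_cons]

lemma terms_sign : ∀ (l : List ℤ) (i : ℕ), ∀ p ∈ terms l i, p.1 = 1 ∨ p.1 = -1 := by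
  intro l
  induction l with
  | nil => intro i p hp; simp [terms] at hp
  | cons d t ih =>
    intro i p hp
    rw [terms, List.mem_append] at hp
    rcases hp with hp | hp
    · rcases List.eq_of_mem_replicate hp with rfl
      by_cases h0 : 0 ≤ d <;> simp [h0]
    · exact ih (i+1) p hp

lemma terms_sum : ∀ (l : List ℤ) (i : ℕ),
    ((terms l i).map (fun p => p.1 * (2*h) ^ p.2)).sum = (2*h) ^ i * val h l := by
  intro l
  induction l with
  | nil => intro i; simp [terms]
  | cons d t ih =>
    intro i
    rw [terms, List.map_append, List.sum_append, ih (i+1)]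
    have hrep : ((List.replicate d.natAbs ((if 0 ≤ d then (1:ℤ) else -1), i)).map
        (fun p => p.1 * (2*h) ^ p.2)).sum = d * (2*h) ^ i := by
      rw [List.map_replicate, List.sum_replicate, nsmul_eq_mul]
      rcases le_or_gt 0 d with h0 | h0
      · rw [if_pos h0, Int.natAbs_of_nonneg h0]; ring
      · rw [if_neg (not_le.mpr h0)]
        have hna : (d.natAbs : ℤ) = -d := by omega
        rw [hna]; ring
    rw [hrep, val_cons]
    ring

lemma sum_fin_get {α : Type*} [AddCommMonoid α] (L : List α) :
    ∑ j : Fin L.length, L.get j = L.sum := by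
  induction L with
  | nil => simp
  | cons a t ih =>
    have hgoal : ∑ j : Fin (t.length + 1), (a :: t).get j = (a :: t).sum := by
      rw [Fin.sum_univ_succ]
      simp [ih]
    exact hgoal

lemma val_eq_range (l : List ℤ) :
    val h l = ∑ i ∈ Finset.range l.length, dig l i * (2*h) ^ i := by
  induction l with
  | nil => simp
  | cons d t ih =>
    rw [val_cons, ih, List.length_cons, Finset.sum_range_succ']
    simp only [dig_cons_succ, dig_cons_zero, pow_zero, mul_one]
    rw [Finset.mul_sum]
    have hcong : ∀ i ∈ Finset.range t.length,
        2*h * (dig t i * (2*h)^i) = dig t i * (2*h)^(i+1) := fun i _ => by ring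
    rw [Finset.sum_congr rfl hcong]
    ring


lemma sum_map_get {α β : Type*} [AddCommMonoid β] (L : List α) (φ : α → β) :
    ∑ j : Fin L.length, φ (L.get j) = (L.map φ).sum := by
  induction L with
  | nil => simp
  | cons a t ih =>
    have hgoal : ∑ j : Fin (t.length + 1), φ ((a :: t).get j) = ((a :: t).map φ).sum := by
      rw [Fin.sum_univ_succ]
      simp [ih]
    exact hgoal

lemma dig_map_range (F : ℕ → ℤ) (N : ℕ) (hF : ∀ j, N ≤ j → F j = 0) (i : ℕ) :
    dig ((List.range N).map F) i = F i := by
  unfold dig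
  rcases lt_or_ge i N with hi | hi
  · rw [List.getD_eq_getElem _ _ (by simpa using hi)]
    simp
  · rw [List.getD_eq_default _ _ (by simpa using hi)]
    exact (hF i hi).symm

end GlenAux

/-- For even g ≥ 2, the g-length of n is the sum of the absolute values of the
digits of its unique g-adic representation. -/
theorem glen_eq_digit_sum_even (g : ℤ) (hg : 2 ≤ g) (heven : Even g) (n : ℤ)
    (f : ℕ →₀ ℤ)
    (hbound : ∀ i, |f i| ≤ g / 2)
    (hcond : ∀ i, |f i| = g / 2 → |f (i + 1)| < g / 2 ∧ 0 ≤ f i * f (i + 1))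
    (hsum : n = f.sum (fun i c => c * g ^ i)) :
    (glen g n : ℤ) = f.sum (fun _ c => |c|) := by
  classical
  obtain ⟨c, hc2⟩ := heven
  set h : ℤ := g / 2 with hhdef
  have hgh : g = 2 * h := by omega
  have hh : 1 ≤ h := by omega
  -- bound on support
  set N : ℕ := f.support.sup id + 1 with hN
  have hFzero : ∀ j, N ≤ j → f j = 0 := by
    intro j hj
    by_contra hfj
    have hjs : j ∈ f.support := Finsupp.mem_support_iff.mpr hfj
    have := Finset.le_sup (f := id) hjs
    simp at this
    omega
  have hsub : f.support ⊆ Finset.range N := by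
    intro j hj
    have := Finset.le_sup (f := id) hj
    simp at this ⊢
    omega
  set lf : List ℤ := (List.range N).map (fun i => f i) with hlf
  have hdig : ∀ i, GlenAux.dig lf i = f i :=
    GlenAux.dig_map_range (fun i => f i) N hFzero
  have hlen : lf.length = N := by rw [hlf]; simp
  have hcanon : GlenAux.Canon h lf := by
    constructor
    · intro i; rw [hdig i]; exact hbound i
    · intro i hi
      rw [hdig i] at hi
      rw [hdig i, hdig (i+1)]
      exact hcond i hi
  have hval : GlenAux.val h lf = n := by
    rw [GlenAux.val_eq_range, hlen]
    rw [hsum, Finsupp.sum_of_support_subset f hsub (fun i c => c * g ^ i)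
      (fun i _ => by simp)]
    exact Finset.sum_congr rfl fun i _ => by rw [hdig i, hgh]
  have hdsum : f.sum (fun _ c => |c|) = (GlenAux.dsum lf : ℤ) := by
    rw [Finsupp.sum_of_support_subset f hsub (fun _ c => |c|) (fun i _ => by simp)]
    rw [GlenAux.dsum_eq_range lf N (le_of_eq hlen)]
    push_cast
    exact Finset.sum_congr rfl fun i _ => by rw [hdig i, Int.abs_eq_natAbs]
  -- the set
  set S : Set ℕ := {k : ℕ | ∃ δ : Fin k → ℤ, ∃ e : Fin k → ℕ,
    (∀ j, δ j = 1 ∨ δ j = -1) ∧ n = ∑ j, δ j * g ^ (e j)} with hS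
  -- membership: upper bound
  set L : List (ℤ × ℕ) := GlenAux.terms lf 0 with hL
  have hLlen : L.length = GlenAux.dsum lf := GlenAux.terms_length lf 0
  have hmem : GlenAux.dsum lf ∈ S := by
    rw [← hLlen]
    refine ⟨fun j => (L.get j).1, fun j => (L.get j).2, fun j =>
      GlenAux.terms_sign lf 0 _ (L.get_mem j), ?_⟩
    rw [GlenAux.sum_map_get L (fun p => p.1 * g ^ p.2)]
    have := GlenAux.terms_sum h lf 0
    rw [pow_zero, one_mul, hval] at this
    rw [hgh]
    exact this.symm
  have hne : S.Nonempty := ⟨_, hmem⟩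
  -- lower bound
  have hDn : GlenAux.D h n = GlenAux.dsum lf := by
    rw [← hval]
    exact GlenAux.D_eq h hh hcanon
  have hlow : GlenAux.dsum lf ≤ sInf S := by
    obtain ⟨δ, e, hδ, hsum'⟩ := Nat.sInf_mem hne
    rw [← hDn]
    have := GlenAux.lower h hh (sInf S) δ e hδ
    rw [← hgh, ← hsum'] at this
    exact this
  have hupp : sInf S ≤ GlenAux.dsum lf := Nat.sInf_le hmem
  have : glen g n = GlenAux.dsum lf := le_antisymm hupp hlow
  rw [this, hdsum]
end

section
/- Let g ≥ 3 be odd and k ≥ 1. Write k = q·(g-1)/2 + r with 0 ≤ r < (g-1)/2, and set A = (g-1)/2, B = 0 if r = 0, and A = -(g-1)/2, B = r otherwise. Then the smallest positive integer n with ℓ_g(n) = k is n = (1 - g^{q-1})/2 + A g^{q-1} + B g^q. -/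
/-- Balanced digit of `n` mod `g`. -/
def bdig (g n : ℤ) : ℤ := if 2 * (n % g) + 1 ≤ g then n % g else n % g - g

lemma bdig_dvd (g n : ℤ) : g ∣ (n - bdig g n) := by
  have h : g ∣ (n - n % g) := Int.dvd_self_sub_of_emod_eq rfl
  unfold bdig
  split
  · exact h
  · have : n - (n % g - g) = (n - n % g) + g := by ring
    rw [this]; exact dvd_add h dvd_rfl

/-- weak bound, for termination -/
lemma bdig_bound' {g : ℤ} (hg : 3 ≤ g) (n : ℤ) : 2 * |bdig g n| ≤ g := by
  have h0 : 0 ≤ n % g := Int.emod_nonneg n (by omega)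
  have h1 : n % g < g := Int.emod_lt_of_pos n (by omega)
  unfold bdig
  split <;> rcases abs_cases (n % g) with ⟨he,_⟩|⟨he,_⟩ <;>
    rcases abs_cases (n % g - g) with ⟨he2,_⟩|⟨he2,_⟩ <;> omega

lemma bdig_bound {g : ℤ} (hg : 3 ≤ g) (ho : Odd g) (n : ℤ) : 2 * |bdig g n| ≤ g - 1 := by
  obtain ⟨t, ht⟩ := ho
  have h0 : 0 ≤ n % g := Int.emod_nonneg n (by omega)
  have h1 : n % g < g := Int.emod_lt_of_pos n (by omega)
  unfold bdig
  split <;> rcases abs_cases (n % g) with ⟨he,_⟩|⟨he,_⟩ <;>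
    rcases abs_cases (n % g - g) with ⟨he2,_⟩|⟨he2,_⟩ <;> omega

lemma bdig_eq {g : ℤ} (hg : 3 ≤ g) (m d : ℤ) (hd : 2 * |d| ≤ g - 1) :
    bdig g (g * m + d) = d := by
  rcases abs_cases d with ⟨he,_⟩|⟨he,_⟩ <;> rw [he] at hd
  all_goals
  have hmod : (g * m + d) % g = d % g := by
    conv_lhs => rw [show g * m + d = d + g * m by ring]
    rw [Int.add_mul_emod_self_left]
  unfold bdig
  rcases le_or_gt 0 d with h | h
  · have : d % g = d := Int.emod_eq_of_lt h (by omega)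
    rw [hmod, this]
    split <;> omega
  · have : d % g = d + g := by
      have h2 : (d + g) % g = d % g := Int.add_mul_emod_self_left (a := d) (b := g) (c := 1) |>.symm ▸ (by rw [show d + g = d + g * 1 by ring, Int.add_mul_emod_self_left])
      rw [← h2, Int.emod_eq_of_lt (by omega) (by omega)]
    rw [hmod, this]
    split <;> omega

lemma bdig_quot_lt {g n : ℤ} (hg : 3 ≤ g) (hn : n ≠ 0) :
    ((n - bdig g n) / g).natAbs < n.natAbs := by
  obtain ⟨m, hm⟩ := bdig_dvd g n
  have hq : (n - bdig g n) / g = m := by rw [hm]; exact Int.mul_ediv_cancel_left m (by omega)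
  rw [hq]
  have hb := bdig_bound' hg n
  have h1 : g * m = n - bdig g n := hm.symm
  have h2 : |g * m| = |g| * |m| := abs_mul g m
  have h3 : |g| = g := abs_of_nonneg (by omega)
  have h4 : |g * m| ≤ |n| + |bdig g n| := by rw [h1]; exact (abs_sub _ _).trans_eq rfl
  have h5 : 1 ≤ |n| := Int.one_le_abs (by omega)
  have := n.abs_eq_natAbs
  have := m.abs_eq_natAbs
  nlinarith [abs_nonneg m, abs_nonneg (bdig g n), abs_nonneg n]

/-- Sum of absolute values of balanced digits. -/
def lstar (g n : ℤ) : ℕ :=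
  if h : 3 ≤ g ∧ n ≠ 0 then
    (bdig g n).natAbs + lstar g ((n - bdig g n) / g)
  else 0
termination_by n.natAbs
decreasing_by exact bdig_quot_lt h.1 h.2

lemma lstar_zero (g : ℤ) : lstar g 0 = 0 := by
  unfold lstar; simp

lemma lstar_step {g : ℤ} (hg : 3 ≤ g) (m d : ℤ) (hd : 2 * |d| ≤ g - 1) :
    lstar g (g * m + d) = d.natAbs + lstar g m := by
  by_cases h0 : g * m + d = 0
  · have hdg : g ∣ d := ⟨-m, by linarith [h0]⟩
    have hd0 : d = 0 := by
      by_contra hd0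
      obtain ⟨c, hc⟩ := hdg
      have hc0 : c ≠ 0 := fun h => hd0 (by simp [hc, h])
      have : g ≤ |d| := by
        rw [hc, abs_mul, abs_of_nonneg (show (0:ℤ) ≤ g by omega)]
        nlinarith [Int.one_le_abs hc0]
      omega
    have hm0 : m = 0 := by
      have : g * m = 0 := by omega
      exact (mul_eq_zero.mp this).resolve_left (by omega)
    subst hd0 hm0
    simp [lstar_zero]
  · rw [lstar]
    rw [dif_pos ⟨hg, h0⟩, bdig_eq hg m d hd]
    congr 1
    rw [show g * m + d - d = g * m by ring, Int.mul_ediv_cancel_left m (by omega)]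

/-- List representation predicate. -/
def GRep (g n : ℤ) (l : List (ℤ × ℕ)) : Prop :=
  (∀ p ∈ l, p.1 = 1 ∨ p.1 = -1) ∧ n = (l.map (fun p => p.1 * g ^ p.2)).sum

lemma fin_iff_list (g n : ℤ) (k : ℕ) :
    (∃ δ : Fin k → ℤ, ∃ e : Fin k → ℕ,
      (∀ j, δ j = 1 ∨ δ j = -1) ∧ n = ∑ j, δ j * g ^ (e j)) ↔
    ∃ l : List (ℤ × ℕ), GRep g n l ∧ l.length = k := by
  constructor
  · rintro ⟨δ, e, hδ, hsum⟩
    refine ⟨List.ofFn (fun j => (δ j, e j)), ⟨?_, ?_⟩, by simp⟩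
    · intro p hp
      rw [List.mem_ofFn] at hp
      obtain ⟨j, hj⟩ := hp
      rw [← hj]; exact hδ j
    · rw [List.map_ofFn, List.sum_ofFn]
      exact hsum
  · rintro ⟨l, ⟨hδ, hsum⟩, hlen⟩
    subst hlen
    refine ⟨fun j => (l.get j).1, fun j => (l.get j).2, fun j => hδ _ (l.get_mem _), ?_⟩
    rw [hsum]
    conv_lhs => rw [← List.ofFn_get l]
    rw [List.map_ofFn, List.sum_ofFn]
    rfl

/-- Every integer has a representation achieving `lstar`. -/
lemma exists_rep {g : ℤ} (hg : 3 ≤ g) (n : ℤ) :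
    ∃ l : List (ℤ × ℕ), GRep g n l ∧ l.length = lstar g n := by
  suffices H : ∀ N : ℕ, ∀ n : ℤ, n.natAbs = N →
      ∃ l : List (ℤ × ℕ), GRep g n l ∧ l.length = lstar g n from H n.natAbs n rfl
  intro N
  induction N using Nat.strong_induction_on with
  | _ N ih =>
    intro n hn
    by_cases h0 : n = 0
    · exact ⟨[], ⟨by simp, by simp [h0]⟩, by simp [h0, lstar_zero]⟩
    · set d := bdig g n with hd
      obtain ⟨m, hm⟩ := bdig_dvd g n
      have hmq : (n - d) / g = m := by rw [hm]; exact Int.mul_ediv_cancel_left m (by omega)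
      have hlt : m.natAbs < N := by rw [← hn, ← hmq]; exact bdig_quot_lt hg h0
      obtain ⟨l, ⟨hlδ, hlsum⟩, hllen⟩ := ih m.natAbs hlt m rfl
      refine ⟨(l.map fun p => (p.1, p.2 + 1)) ++
        List.replicate d.natAbs ((if 0 ≤ d then 1 else -1), 0), ⟨?_, ?_⟩, ?_⟩
      · intro p hp
        rw [List.mem_append] at hp
        rcases hp with hp | hp
        · rw [List.mem_map] at hp
          obtain ⟨a, ha, hap⟩ := hp
          rcases hlδ a ha with h | h <;> rw [← hap] <;> simp [h]
        · rw [List.mem_replicate] at hp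
          rw [hp.2]; split <;> simp
      · rw [List.map_append, List.sum_append, List.map_map, List.map_replicate,
          List.sum_replicate]
        have e1 : ((fun p : ℤ × ℕ => p.1 * g ^ p.2) ∘ fun p : ℤ × ℕ => (p.1, p.2 + 1)) =
            fun p : ℤ × ℕ => g * (p.1 * g ^ p.2) := by
          funext p; simp [pow_succ]; ring
        rw [e1, List.sum_map_mul_left, ← hlsum]
        have e2 : ((if 0 ≤ d then (1:ℤ) else -1), 0).1 * g ^ (((if 0 ≤ d then (1:ℤ) else -1), 0) : ℤ × ℕ).2 = if 0 ≤ d then (1:ℤ) else -1 := by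
          split <;> simp
        rw [e2]
        rcases le_or_gt 0 d with h | h
        · rw [if_pos h]
          rw [nsmul_eq_mul, mul_one, Int.natAbs_of_nonneg h]
          omega
        · rw [if_neg (not_le.mpr h)]
          have hna : (d.natAbs : ℤ) = -d := by omega
          rw [nsmul_eq_mul, mul_neg_one, hna]
          omega
      · rw [List.length_append, List.length_map, List.length_replicate, hllen]
        conv_rhs => rw [lstar]
        rw [dif_pos ⟨hg, h0⟩, ← hd, hmq]
        omega

lemma bdig_zero (g : ℤ) (hg : 3 ≤ g) : bdig g 0 = 0 := by
  unfold bdig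
  rw [Int.zero_emod]
  rw [if_pos (by omega)]

/-- lstar changes by at most 1 under ±1. -/
lemma lstar_pm_one {g : ℤ} (hg : 3 ≤ g) (ho : Odd g) :
    ∀ n : ℤ, lstar g (n + 1) ≤ lstar g n + 1 ∧ lstar g (n - 1) ≤ lstar g n + 1 := by
  obtain ⟨t, ht⟩ := ho
  have ht1 : 1 ≤ t := by omega
  suffices H : ∀ N : ℕ, ∀ n : ℤ, n.natAbs = N →
      lstar g (n + 1) ≤ lstar g n + 1 ∧ lstar g (n - 1) ≤ lstar g n + 1 from
    fun n => H n.natAbs n rfl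
  intro N
  induction N using Nat.strong_induction_on with
  | _ N ih =>
    intro n hn
    set d := bdig g n with hd
    obtain ⟨m, hm⟩ := bdig_dvd g n
    have hmq : (n - d) / g = m := by rw [hm]; exact Int.mul_ediv_cancel_left m (by omega)
    have hdb : 2 * |d| ≤ g - 1 := bdig_bound hg ⟨t, ht⟩ n
    have hdb' : d.natAbs ≤ t := by
      rcases abs_cases d with ⟨he,_⟩|⟨he,_⟩ <;> omega
    have hnd : n = g * m + d := by omega
    have hstep : lstar g n = d.natAbs + lstar g m := by rw [hnd]; exact lstar_step hg m d hdb
    constructor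
    · by_cases hdt : d = t
      · have hn0 : n ≠ 0 := by
          intro h; rw [h] at hd; rw [bdig_zero g hg] at hd; omega
        have hlt : m.natAbs < N := by rw [← hn, ← hmq]; exact bdig_quot_lt hg hn0
        have hrw : n + 1 = g * (m + 1) + (-t) := by rw [hnd, hdt]; ring_nf; omega
        rw [hrw, lstar_step hg (m+1) (-t) (by rw [abs_neg, abs_of_nonneg (by omega)]; omega)]
        have := (ih m.natAbs hlt m rfl).1
        omega
      · have hrw : n + 1 = g * m + (d + 1) := by omega
        rw [hrw, lstar_step hg m (d+1) (by rcases abs_cases (d+1) with ⟨he,_⟩|⟨he,_⟩ <;> omega)]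
        omega
    · by_cases hdt : d = -t
      · have hn0 : n ≠ 0 := by
          intro h; rw [h] at hd; rw [bdig_zero g hg] at hd; omega
        have hlt : m.natAbs < N := by rw [← hn, ← hmq]; exact bdig_quot_lt hg hn0
        have hrw : n - 1 = g * (m - 1) + t := by rw [hnd, hdt]; ring_nf; omega
        rw [hrw, lstar_step hg (m-1) t (by rw [abs_of_nonneg (by omega)]; omega)]
        have := (ih m.natAbs hlt m rfl).2
        omega
      · have hrw : n - 1 = g * m + (d - 1) := by omega
        rw [hrw, lstar_step hg m (d-1) (by rcases abs_cases (d-1) with ⟨he,_⟩|⟨he,_⟩ <;> omega)]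
        omega

/-- lstar is 1-Lipschitz. -/
lemma lstar_lipschitz {g : ℤ} (hg : 3 ≤ g) (ho : Odd g) (m : ℤ) :
    ∀ s : ℤ, lstar g (m + s) ≤ lstar g m + s.natAbs := by
  suffices H : ∀ N : ℕ, ∀ s : ℤ, s.natAbs = N → ∀ m : ℤ,
      lstar g (m + s) ≤ lstar g m + s.natAbs from fun s => H s.natAbs s rfl m
  intro N
  induction N with
  | zero => intro s hs m; have : s = 0 := by omega
            simp [this]
  | succ N ihN =>
    intro s hs m
    rcases le_or_gt 0 s with h | h
    · have h1 : s - 1 ≥ 0 := by omega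
      have : m + s = (m + (s-1)) + 1 := by ring
      rw [this]
      calc lstar g ((m + (s-1)) + 1) ≤ lstar g (m + (s-1)) + 1 := (lstar_pm_one hg ho _).1
        _ ≤ lstar g m + (s-1).natAbs + 1 := by
            have := ihN (s-1) (by omega) m; omega
        _ ≤ lstar g m + s.natAbs := by omega
    · have : m + s = (m + (s+1)) - 1 := by ring
      rw [this]
      calc lstar g ((m + (s+1)) - 1) ≤ lstar g (m + (s+1)) + 1 := (lstar_pm_one hg ho _).2
        _ ≤ lstar g m + (s+1).natAbs + 1 := by
            have := ihN (s+1) (by omega) m; omega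
        _ ≤ lstar g m + s.natAbs := by omega

/-- Key subadditivity. -/
lemma lstar_add_le {g : ℤ} (hg : 3 ≤ g) (ho : Odd g) (s m : ℤ) :
    lstar g (g * m + s) ≤ lstar g m + s.natAbs := by
  have h0 : lstar g (g * m) = lstar g m := by
    have := lstar_step hg m 0 (by simp; omega)
    simpa using this
  calc lstar g (g * m + s) ≤ lstar g (g * m) + s.natAbs := lstar_lipschitz hg ho _ s
    _ = lstar g m + s.natAbs := by rw [h0]

lemma list_split_aux (g : ℤ) (l : List (ℤ × ℕ)) :
    (l.filter (fun p => p.2 == 0)).length + (l.filter (fun p => p.2 != 0)).length = l.length ∧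
    (l.map (fun p => p.1 * g ^ p.2)).sum =
      ((l.filter (fun p => p.2 == 0)).map (fun p => p.1 * g ^ p.2)).sum +
      ((l.filter (fun p => p.2 != 0)).map (fun p => p.1 * g ^ p.2)).sum := by
  induction l with
  | nil => simp
  | cons a l ih =>
    rcases eq_or_ne a.2 0 with h | h
    · rw [List.filter_cons_of_pos (by simp [h]), List.filter_cons_of_neg (by simp [h])]
      simp only [List.map_cons, List.sum_cons, List.length_cons]
      refine ⟨by omega, ?_⟩
      rw [ih.2]; ring
    · rw [List.filter_cons_of_neg (by simp [h]), List.filter_cons_of_pos (by simp [h])]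
      simp only [List.map_cons, List.sum_cons, List.length_cons]
      refine ⟨by omega, ?_⟩
      rw [ih.2]; ring

lemma abs_sum_le_length (l : List (ℤ × ℕ)) (hδ : ∀ p ∈ l, p.1 = 1 ∨ p.1 = -1) :
    ((l.map (fun p : ℤ × ℕ => p.1)).sum).natAbs ≤ l.length := by
  induction l with
  | nil => simp
  | cons a l ih =>
    have ha := hδ a (by simp)
    have ihl := ih (fun p hp => hδ p (by simp [hp]))
    simp only [List.map_cons, List.sum_cons, List.length_cons]
    rcases ha with h | h <;> rw [h] <;> omega

lemma snd_sum_filter_le (q : ℤ × ℕ → Bool) (l : List (ℤ × ℕ)) :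
    ((l.filter q).map Prod.snd).sum ≤ (l.map Prod.snd).sum := by
  induction l with
  | nil => simp
  | cons a l ih =>
    by_cases h : q a
    · rw [List.filter_cons_of_pos h]; simp only [List.map_cons, List.sum_cons]; omega
    · rw [List.filter_cons_of_neg (by simpa using h)]
      simp only [List.map_cons, List.sum_cons]; omega

lemma snd_sum_sub_one (l : List (ℤ × ℕ)) (h1 : ∀ p ∈ l, 1 ≤ p.2) :
    (l.map (fun p => p.2 - 1)).sum + l.length = (l.map Prod.snd).sum := by
  induction l with
  | nil => simp
  | cons a l ih =>
    have := h1 a (by simp)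
    have := ih (fun p hp => h1 p (by simp [hp]))
    simp only [List.map_cons, List.sum_cons, List.length_cons]
    omega

/-- Lower bound: any representation of n has at least lstar g n terms. -/
lemma lstar_le_rep {g : ℤ} (hg : 3 ≤ g) (ho : Odd g) (l : List (ℤ × ℕ)) (n : ℤ)
    (hrep : GRep g n l) : lstar g n ≤ l.length := by
  suffices H : ∀ M : ℕ, ∀ l : List (ℤ × ℕ), ∀ n : ℤ,
      l.length + (l.map Prod.snd).sum = M → GRep g n l → lstar g n ≤ l.length from
    H _ l n rfl hrep
  intro M
  induction M using Nat.strong_induction_on with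
  | _ M ih =>
    intro l n hM ⟨hδ, hsum⟩
    rcases List.eq_nil_or_concat l with rfl | hne
    · simp at hsum
      simp [hsum, lstar_zero]
    · have hlen1 : 1 ≤ l.length := by
        obtain ⟨l', a, rfl⟩ := hne; simp
      set l0 := l.filter (fun p => p.2 == 0) with hl0
      set l1 := l.filter (fun p => p.2 != 0) with hl1
      obtain ⟨hsplitlen, hsplitsum⟩ := list_split_aux g l
      rw [← hl0, ← hl1] at hsplitlen hsplitsum
      have hl0mem : ∀ p ∈ l0, p.2 = 0 := by
        intro p hp; rw [hl0, List.mem_filter] at hp; simpa using hp.2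
      have hl1mem : ∀ p ∈ l1, 1 ≤ p.2 := by
        intro p hp; rw [hl1, List.mem_filter] at hp
        have := hp.2; simp at this; omega
      set s := ((l0.map (fun p : ℤ × ℕ => p.1)).sum) with hs
      have hs0 : (l0.map (fun p => p.1 * g ^ p.2)).sum = s := by
        rw [hs]
        congr 1
        apply List.map_congr_left
        intro p hp
        rw [hl0mem p hp]; ring
      set l1' := l1.map (fun p : ℤ × ℕ => (p.1, p.2 - 1)) with hl1'
      set m' := ((l1'.map (fun p => p.1 * g ^ p.2)).sum) with hm'
      have hs1 : (l1.map (fun p => p.1 * g ^ p.2)).sum = g * m' := by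
        rw [hm', hl1', List.map_map, ← List.sum_map_mul_left]
        congr 1
        apply List.map_congr_left
        intro p hp
        have h1 := hl1mem p hp
        simp only [Function.comp]
        obtain ⟨c, hc⟩ : ∃ c, p.2 = c + 1 := ⟨p.2 - 1, by omega⟩
        rw [hc, Nat.add_sub_cancel, pow_succ]
        ring
      have hn : n = g * m' + s := by rw [hsum, hsplitsum, hs0, hs1]; ring
      have hrep' : GRep g m' l1' := by
        refine ⟨?_, rfl⟩
        intro p hp
        rw [hl1', List.mem_map] at hp
        obtain ⟨a, ha, hap⟩ := hp
        have := hδ a (List.mem_of_mem_filter ha)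
        rw [← hap]; exact this
      have hμ : l1'.length + (l1'.map Prod.snd).sum < M := by
        have e1 : l1'.length = l1.length := by rw [hl1']; simp
        have e2 : l1'.map Prod.snd = l1.map (fun p => p.2 - 1) := by
          rw [hl1', List.map_map]; rfl
        have e3 := snd_sum_sub_one l1 hl1mem
        have e4 := snd_sum_filter_le (fun p => p.2 != 0) l
        rw [← hl1] at e4
        rw [e1, e2]
        omega
      have hIH := ih _ hμ l1' m' rfl hrep'
      have hsabs : s.natAbs ≤ l0.length := abs_sum_le_length l0
        (fun p hp => hδ p (List.mem_of_mem_filter hp))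
      calc lstar g n ≤ lstar g m' + s.natAbs := by rw [hn]; exact lstar_add_le hg ho s m'
        _ ≤ l1'.length + s.natAbs := by omega
        _ ≤ l.length := by
            have : l1'.length = l1.length := by rw [hl1']; simp
            omega

lemma glen_eq_lstar {g : ℤ} (hg : 3 ≤ g) (ho : Odd g) (n : ℤ) :
    glen g n = lstar g n := by
  rw [glen]
  set S := {k : ℕ | ∃ δ : Fin k → ℤ, ∃ e : Fin k → ℕ,
    (∀ j, δ j = 1 ∨ δ j = -1) ∧ n = ∑ j, δ j * g ^ (e j)} with hS
  have hmem : lstar g n ∈ S := by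
    obtain ⟨l, hrep, hlen⟩ := exists_rep hg n
    rw [hS, Set.mem_setOf_eq, fin_iff_list]
    exact ⟨l, hrep, hlen⟩
  have hlb : ∀ k ∈ S, lstar g n ≤ k := by
    intro k hk
    rw [hS, Set.mem_setOf_eq, fin_iff_list] at hk
    obtain ⟨l, hrep, hlen⟩ := hk
    rw [← hlen]
    exact lstar_le_rep hg ho l n hrep
  exact le_antisymm (Nat.sInf_le hmem) (hlb _ (Nat.sInf_mem ⟨_, hmem⟩))

/-- The candidate minimal value. -/
def Nmin (g : ℤ) (k : ℕ) : ℤ :=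
  if h : 3 ≤ g ∧ g - 1 < 2 * (k : ℤ) then
    g * Nmin g (k - ((g - 1) / 2).toNat) - (g - 1) / 2
  else k
termination_by k
decreasing_by
  have h1 : 1 ≤ (g - 1) / 2 := by omega
  have h2 : 1 ≤ ((g - 1) / 2).toNat := by omega
  omega

lemma Nmin_small {g : ℤ} (k : ℕ) (h : 2 * (k:ℤ) ≤ g - 1) : Nmin g k = k := by
  rw [Nmin]
  rw [dif_neg (by omega)]

lemma Nmin_big {g : ℤ} (hg : 3 ≤ g) (k : ℕ) (h : g - 1 < 2 * (k:ℤ)) :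
    Nmin g k = g * Nmin g (k - ((g - 1) / 2).toNat) - (g - 1) / 2 := by
  rw [Nmin]
  rw [dif_pos ⟨hg, h⟩]

lemma Nmin_pos {g : ℤ} (hg : 3 ≤ g) : ∀ k : ℕ, 1 ≤ k → 1 ≤ Nmin g k := by
  intro k
  induction k using Nat.strong_induction_on with
  | _ k ih =>
    intro hk1
    rcases le_or_gt (2 * (k:ℤ)) (g-1) with h | h
    · rw [Nmin_small k h]; omega
    · rw [Nmin_big hg k h]
      have hH : 1 ≤ ((g - 1) / 2).toNat := by omega
      have hkH : 1 ≤ k - ((g - 1) / 2).toNat := by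
        have : ((((g-1)/2).toNat : ℤ)) = (g-1)/2 := by omega
        omega
      have := ih (k - ((g - 1) / 2).toNat) (by omega) hkH
      nlinarith [show (1:ℤ) ≤ (g-1)/2 by omega, show (g-1)/2 ≤ g - 2 by omega]

lemma Nmin_mono_succ {g : ℤ} (hg : 3 ≤ g) (ho : Odd g) :
    ∀ k : ℕ, 1 ≤ k → Nmin g k ≤ Nmin g (k + 1) := by
  obtain ⟨t, ht⟩ := ho
  have hdiv : (g - 1) / 2 = t := by omega
  have hH : (((g - 1) / 2).toNat : ℤ) = t := by omega
  intro k
  induction k using Nat.strong_induction_on with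
  | _ k ih =>
    intro hk1
    rcases le_or_gt (2 * ((k:ℤ) + 1)) (g-1) with h | h
    · rw [Nmin_small k (by omega), Nmin_small (k+1) (by push_cast; omega)]
      push_cast; omega
    · rcases le_or_gt (2 * (k:ℤ)) (g-1) with h2 | h2
      · -- k = t, k+1 = t+1
        have hkt : (k : ℤ) = t := by omega
        rw [Nmin_small k h2, Nmin_big hg (k+1) (by push_cast; omega)]
        have : (k + 1 - ((g - 1) / 2).toNat) = 1 := by omega
        rw [this, Nmin_small 1 (by push_cast; omega)]
        push_cast
        omega
      · rw [Nmin_big hg k h2, Nmin_big hg (k+1) (by push_cast; omega)]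
        have hkH : 1 ≤ k - ((g - 1) / 2).toNat := by omega
        have he : (k + 1 - ((g - 1) / 2).toNat) = (k - ((g - 1) / 2).toNat) + 1 := by omega
        rw [he]
        have := ih (k - ((g - 1) / 2).toNat) (by omega) hkH
        nlinarith

lemma Nmin_mono {g : ℤ} (hg : 3 ≤ g) (ho : Odd g) (a b : ℕ) (ha : 1 ≤ a) (hab : a ≤ b) :
    Nmin g a ≤ Nmin g b := by
  induction b, hab using Nat.le_induction with
  | base => rfl
  | succ b hab ih => exact le_trans ih (Nmin_mono_succ hg ho b (by omega))

lemma Nmin_lstar {g : ℤ} (hg : 3 ≤ g) (ho : Odd g) :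
    ∀ k : ℕ, 1 ≤ k → lstar g (Nmin g k) = k := by
  obtain ⟨t, ht⟩ := ho
  have hH : (((g - 1) / 2).toNat : ℤ) = t := by omega
  intro k
  induction k using Nat.strong_induction_on with
  | _ k ih =>
    intro hk1
    rcases le_or_gt (2 * (k:ℤ)) (g-1) with h | h
    · rw [Nmin_small k h]
      have : ((k:ℤ)) = g * 0 + (k:ℤ) := by ring
      rw [this, lstar_step hg 0 k (by rw [abs_of_nonneg (by positivity)]; omega), lstar_zero]
      omega
    · rw [Nmin_big hg k h]
      have hkH : 1 ≤ k - ((g - 1) / 2).toNat := by omega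
      have hrw : g * Nmin g (k - ((g - 1) / 2).toNat) - (g - 1) / 2
          = g * Nmin g (k - ((g - 1) / 2).toNat) + (-((g-1)/2)) := by ring
      rw [hrw, lstar_step hg _ (-((g-1)/2)) (by rw [abs_neg, abs_of_nonneg (by omega)]; omega)]
      rw [ih (k - ((g - 1) / 2).toNat) (by omega) hkH]
      omega

lemma lstar_eq_zero {g : ℤ} (hg : 3 ≤ g) {n : ℤ} (h : lstar g n = 0) : n = 0 := by
  obtain ⟨l, ⟨_, hsum⟩, hlen⟩ := exists_rep hg n
  rw [h, List.length_eq_zero_iff] at hlen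
  rw [hlen] at hsum
  simpa using hsum

/-- Minimality. -/
lemma Nmin_min {g : ℤ} (hg : 3 ≤ g) (ho : Odd g) :
    ∀ m : ℤ, 1 ≤ m → Nmin g (lstar g m) ≤ m := by
  obtain ⟨t, ht⟩ := ho
  have hH : (((g - 1) / 2).toNat : ℤ) = t := by omega
  suffices H : ∀ N : ℕ, ∀ m : ℤ, m.natAbs = N → 1 ≤ m → Nmin g (lstar g m) ≤ m from
    fun m => H m.natAbs m rfl
  intro N
  induction N using Nat.strong_induction_on with
  | _ N ih =>
    intro m hmN hm1
    set d := bdig g m with hd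
    obtain ⟨m1, hm⟩ := bdig_dvd g m
    have hmq : (m - d) / g = m1 := by rw [hm]; exact Int.mul_ediv_cancel_left m1 (by omega)
    have hdb : 2 * |d| ≤ g - 1 := bdig_bound hg ⟨t, ht⟩ m
    have hdb' : d.natAbs ≤ t := by rcases abs_cases d with ⟨he,_⟩|⟨he,_⟩ <;> omega
    have hmd : m = g * m1 + d := by omega
    have hstep : lstar g m = d.natAbs + lstar g m1 := by
      rw [hmd]; exact lstar_step hg m1 d hdb
    have hm1nn : 0 ≤ m1 := by nlinarith [abs_le.mp (show |d| ≤ t by omega)]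
    rcases eq_or_lt_of_le hm1nn with h10 | h11
    · -- m1 = 0, m = d
      have : m = d := by rw [hmd, ← h10]; ring
      rw [hstep, ← h10, lstar_zero]
      rw [Nmin_small _ (by rw [← this] at hdb ⊢; rcases abs_cases m with ⟨he,_⟩|⟨he,_⟩ <;> omega)]
      omega
    · have hlt : m1.natAbs < N := by rw [← hmN, ← hmq]; exact bdig_quot_lt hg (by omega)
      have hIH := ih m1.natAbs hlt m1 rfl (by omega)
      have hk1pos : 1 ≤ lstar g m1 := by
        rcases Nat.eq_zero_or_pos (lstar g m1) with h | h
        · exact absurd (lstar_eq_zero hg h) (by omega)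
        · omega
      have hmono : Nmin g (lstar g m) ≤ Nmin g (lstar g m1 + ((g-1)/2).toNat) := by
        apply Nmin_mono hg ⟨t, ht⟩ _ _ (by omega) (by omega)
      have hbig : Nmin g (lstar g m1 + ((g-1)/2).toNat)
          = g * Nmin g (lstar g m1) - (g-1)/2 := by
        rw [Nmin_big hg _ (by push_cast; omega)]
        have he : lstar g m1 + ((g-1)/2).toNat - ((g-1)/2).toNat = lstar g m1 := by omega
        rw [he]
      have hNpos := Nmin_pos hg (lstar g m1) hk1pos
      calc Nmin g (lstar g m) ≤ g * Nmin g (lstar g m1) - (g-1)/2 := by rw [← hbig]; exact hmono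
        _ ≤ g * m1 - (g-1)/2 := by nlinarith
        _ ≤ m := by
            have hdr := abs_le.mp (show |d| ≤ t by omega)
            omega

lemma Nmin_closed {g : ℤ} (hg : 3 ≤ g) (ho : Odd g) :
    ∀ k : ℕ, 1 ≤ k →
      2 * Nmin g k = 1 + (2 * (((k-1) % ((g-1)/2).toNat + 1 : ℕ) : ℤ) - 1) *
        g ^ ((k-1) / ((g-1)/2).toNat) := by
  obtain ⟨t, ht⟩ := ho
  set H := ((g-1)/2).toNat with hHdef
  have hH : (H : ℤ) = t := by omega
  have hH1 : 1 ≤ H := by omega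
  intro k
  induction k using Nat.strong_induction_on with
  | _ k ih =>
    intro hk1
    rcases le_or_gt (2 * (k:ℤ)) (g-1) with h | h
    · have hkH : k - 1 < H := by omega
      rw [Nmin_small k h, Nat.div_eq_of_lt hkH, Nat.mod_eq_of_lt hkH]
      push_cast
      have : (k:ℤ) - 1 + 1 = k := by omega
      rw [pow_zero]
      omega
    · have hkH : 1 ≤ k - H := by omega
      have hk'1 : k - 1 = (k - H - 1) + 1 * H := by omega
      rw [Nmin_big hg k h, ← hHdef]
      have hdiv : (k-1) / H = (k - H - 1) / H + 1 := by
        rw [hk'1, Nat.add_mul_div_right _ _ (by omega)]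
      have hmod : (k-1) % H = (k - H - 1) % H := by
        rw [hk'1, Nat.add_mul_mod_self_right]
      rw [hdiv, hmod]
      have := ih (k - H) (by omega) hkH
      rw [pow_succ]
      have hd2 : (g-1)/2 = t := by omega
      linear_combination g * this - 2 * hd2 + ht

/-- Formula for the smallest positive integer of g-length k, for odd g ≥ 3. -/
theorem smallest_of_glength_odd (g : ℤ) (hg : 3 ≤ g) (hodd : Odd g) (k : ℕ) (hk : 1 ≤ k)
    (q r A B : ℤ)
    (hq : q = 2 * (k : ℤ) / (g - 1))
    (hr : r = (k : ℤ) % ((g - 1) / 2))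
    (hA : A = if r = 0 then (g - 1) / 2 else -((g - 1) / 2))
    (hB : B = if r = 0 then 0 else r)
    (n : ℤ)
    (hn : (n : ℚ) = (1 - (g : ℚ) ^ (q - 1)) / 2 + (A : ℚ) * (g : ℚ) ^ (q - 1)
        + (B : ℚ) * (g : ℚ) ^ q) :
    IsLeast {m : ℤ | 0 < m ∧ glen g m = k} n := by
  obtain ⟨t, ht⟩ := hodd
  have hodd' : Odd g := ⟨t, ht⟩
  have ht1 : 1 ≤ t := by omega
  have hd2 : (g - 1) / 2 = t := by omega
  set H := ((g - 1) / 2).toNat with hHdef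
  have hH : (H : ℤ) = t := by omega
  have hH1 : 1 ≤ H := by omega
  -- identify q and r
  have hq' : q = (k : ℤ) / t := by
    rw [hq, show (2 : ℤ) * (k:ℤ) = 2 * (k:ℤ) from rfl, show g - 1 = 2 * t by omega,
      Int.mul_ediv_mul_of_pos _ _ (by norm_num : (0:ℤ) < 2)]
  have hr' : r = (k : ℤ) % t := by rw [hr, hd2]
  have hqr : t * q + r = k := by rw [hq', hr']; exact Int.mul_ediv_add_emod _ _
  have hr0 : 0 ≤ r := by rw [hr']; exact Int.emod_nonneg _ (by omega)
  have hrt : r < t := by rw [hr']; exact Int.emod_lt_of_pos _ (by omega)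
  have hq0 : 0 ≤ q := by rw [hq']; exact Int.ediv_nonneg (by positivity) (by omega)
  set qn := q.toNat with hqndef
  set rn := r.toNat with hrndef
  have hqn : (qn : ℤ) = q := Int.toNat_of_nonneg hq0
  have hrn : (rn : ℤ) = r := Int.toNat_of_nonneg hr0
  have hkqr : k = qn * H + rn := by
    have : ((qn * H + rn : ℕ) : ℤ) = (k : ℤ) := by
      push_cast
      rw [hqn, hH, hrn]
      linarith [hqr]
    exact_mod_cast this.symm
  have hrnH : rn < H := by omega
  have hG0 : (g : ℚ) ≠ 0 := by
    have : (3:ℚ) ≤ (g:ℚ) := by exact_mod_cast hg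
    intro h; rw [h] at this; norm_num at this
  have hgx : (g:ℚ) ^ (q - 1) * (g:ℚ) = (g:ℚ) ^ q := by
    rw [← zpow_add_one₀ hG0, sub_add_cancel]
  have hgtq : (g:ℚ) = 2 * (t:ℚ) + 1 := by exact_mod_cast ht
  have hclosed := Nmin_closed hg hodd' k hk
  rw [← hHdef] at hclosed
  subst hA hB
  have hnN : n = Nmin g k := by
    by_cases hrz : r = 0
    · -- r = 0 case
      have hrn0 : rn = 0 := by omega
      have hq1 : 1 ≤ q := by
        by_contra hcon
        have hq00 : q = 0 := by omega
        rw [hq00] at hqr; omega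
      have hqn1 : 1 ≤ qn := by omega
      rw [if_pos hrz, if_pos hrz] at hn
      rw [hd2] at hn
      push_cast at hn
      have hn2 : 2 * (n:ℚ) = 1 + (2 * (t:ℚ) - 1) * (g:ℚ) ^ (q - 1) := by
        linear_combination 2 * hn
      -- closed form
      have haH : H ≤ qn * H := Nat.le_mul_of_pos_left H (by omega)
      have hsub : (qn - 1) * H = qn * H - H := by rw [Nat.sub_mul, one_mul]
      have hk1 : k - 1 = (H - 1) + (qn - 1) * H := by omega
      have hdiv : (k - 1) / H = qn - 1 := by
        rw [hk1, Nat.add_mul_div_right _ _ (by omega), Nat.div_eq_of_lt (by omega)]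
        omega
      have hmod : (k - 1) % H = H - 1 := by
        rw [hk1, Nat.add_mul_mod_self_right, Nat.mod_eq_of_lt (by omega)]
      rw [hdiv, hmod] at hclosed
      rw [show ((H - 1 + 1 : ℕ) : ℤ) = t by omega] at hclosed
      have hcast : ((qn - 1 : ℕ) : ℤ) = q - 1 := by omega
      have hQc : 2 * ((Nmin g k : ℤ) : ℚ) = 1 + (2 * (t:ℚ) - 1) * (g:ℚ) ^ ((qn - 1 : ℕ)) := by
        exact_mod_cast congrArg (fun z : ℤ => (z : ℚ)) hclosed
      have hexp : (g:ℚ) ^ (q - 1) = (g:ℚ) ^ ((qn - 1 : ℕ)) := by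
        rw [← hcast, zpow_natCast]
      rw [hexp] at hn2
      have : (n : ℚ) = ((Nmin g k : ℤ) : ℚ) := by linarith
      exact_mod_cast this
    · -- r ≠ 0 case
      have hrn1 : 1 ≤ rn := by omega
      rw [if_neg hrz, if_neg hrz] at hn
      rw [hd2] at hn
      push_cast at hn
      have hn2 : 2 * (n:ℚ) = 1 + (2 * (r:ℚ) - 1) * (g:ℚ) ^ q := by
        linear_combination 2 * hn - hgx + ((g:ℚ) ^ (q-1)) * hgtq
      have hk1 : k - 1 = (rn - 1) + qn * H := by omega
      have hdiv : (k - 1) / H = qn := by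
        rw [hk1, Nat.add_mul_div_right _ _ (by omega), Nat.div_eq_of_lt (by omega)]
        omega
      have hmod : (k - 1) % H = rn - 1 := by
        rw [hk1, Nat.add_mul_mod_self_right, Nat.mod_eq_of_lt (by omega)]
      rw [hdiv, hmod] at hclosed
      rw [show ((rn - 1 + 1 : ℕ) : ℤ) = r by omega] at hclosed
      have hQc : 2 * ((Nmin g k : ℤ) : ℚ) = 1 + (2 * (r:ℚ) - 1) * (g:ℚ) ^ (qn : ℕ) := by
        exact_mod_cast congrArg (fun z : ℤ => (z : ℚ)) hclosed
      have hexp : (g:ℚ) ^ q = (g:ℚ) ^ (qn : ℕ) := by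
        rw [← hqn, zpow_natCast]
      rw [hexp] at hn2
      have : (n : ℚ) = ((Nmin g k : ℤ) : ℚ) := by linarith
      exact_mod_cast this
  constructor
  · refine ⟨?_, ?_⟩
    · rw [hnN]
      have := Nmin_pos hg k hk
      omega
    · rw [hnN, glen_eq_lstar hg hodd', Nmin_lstar hg hodd' k hk]
  · rintro m ⟨hm0, hmk⟩
    rw [hnN]
    have hlm : lstar g m = k := by rw [← glen_eq_lstar hg hodd']; exact hmk
    rw [← hlm]
    exact Nmin_min hg hodd' m hm0
end

section
/- For every integer k ≥ 1, the smallest positive integer n with ℓ_2(n) = k is n = (2^{2k-1} + 1)/3. -/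
namespace TwoLen

def val (p : ℤ × ℕ) : ℤ := p.1 * 2 ^ p.2

def Rep (n : ℤ) (l : List (ℤ × ℕ)) : Prop :=
  (∀ p ∈ l, p.1 = 1 ∨ p.1 = -1) ∧ n = (l.map val).sum

def Mk : ℕ → ℤ
  | 0 => 0
  | j+1 => 4 * Mk j + 1

def Nk (j : ℕ) : ℤ := 2 * Mk (j - 1) + 1

lemma rep_shift {n l} (h : Rep n l) :
    Rep (2 * n) (l.map fun p => (p.1, p.2 + 1)) := by
  obtain ⟨hs, hsum⟩ := h
  constructor
  · intro p hp
    simp only [List.mem_map] at hp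
    obtain ⟨q, hq, rfl⟩ := hp
    exact hs q hq
  · rw [List.map_map, hsum, ← List.sum_map_mul_left]
    congr 1
    apply List.map_congr_left
    intro p _
    simp [val, pow_succ]
    ring

lemma rep_cons {n l} (ε : ℤ) (hε : ε = 1 ∨ ε = -1) (h : Rep n l) :
    Rep (n + ε) ((ε, 0) :: l) := by
  obtain ⟨hs, hsum⟩ := h
  refine ⟨?_, ?_⟩
  · intro p hp
    rcases List.mem_cons.mp hp with rfl | hp
    · exact hε
    · exact hs p hp
  · simp [val, hsum]; ring

lemma rep_nil_eq {n} (h : Rep n []) : n = 0 := by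
  simpa [Rep] using h.2

/-- split a rep into zero-exponent part and positive-exponent part -/
lemma rep_split {n l} (h : Rep n l) :
    Rep n (l.filter (fun p => p.2 = 0) ++ l.filter (fun p => ¬ p.2 = 0)) := by
  obtain ⟨hs, hsum⟩ := h
  have hperm : (l.filter (fun p => p.2 = 0) ++ l.filter (fun p => ¬ p.2 = 0)).Perm l := by
    simpa using List.filter_append_perm (fun p => decide (p.2 = 0)) l
  constructor
  · intro p hp
    exact hs p (hperm.mem_iff.mp hp)
  · rw [hsum]
    exact ((hperm.map val).sum_eq).symm

lemma two_dvd_filter_pos_sum (l : List (ℤ × ℕ))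
    (hs : ∀ p ∈ l, p.1 = 1 ∨ p.1 = -1) :
    (2 : ℤ) ∣ ((l.filter (fun p => ¬ p.2 = 0)).map val).sum := by
  apply List.dvd_sum
  intro x hx
  simp only [List.mem_map] at hx
  obtain ⟨p, hp, rfl⟩ := hx
  have hp2 : ¬ p.2 = 0 := by
    have := List.of_mem_filter hp
    simpa using this
  obtain ⟨e, he⟩ : ∃ e, p.2 = e + 1 := ⟨p.2 - 1, by omega⟩
  exact ⟨p.1 * 2 ^ e, by simp [val, he, pow_succ]; ring⟩


/-- if all exponents positive, the number is twice something representable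
    with the same length -/
lemma rep_unshift {n l} (h : Rep n l) (hpos : ∀ p ∈ l, ¬ p.2 = 0) :
    ∃ m, n = 2 * m ∧ Rep m (l.map fun p => (p.1, p.2 - 1)) := by
  obtain ⟨hs, hsum⟩ := h
  refine ⟨((l.map fun p => (p.1, p.2 - 1)).map val).sum, ?_, ?_, rfl⟩
  · rw [hsum, List.map_map, ← List.sum_map_mul_left]
    refine congrArg List.sum ?_
    apply List.map_congr_left
    intro p hp
    have h1 : ¬ p.2 = 0 := hpos p hp
    obtain ⟨e, he⟩ : ∃ e, p.2 = e + 1 := ⟨p.2 - 1, by omega⟩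
    simp [val, he, pow_succ]
    ring
  · intro p hp
    simp only [List.mem_map] at hp
    obtain ⟨q, hq, rfl⟩ := hp
    exact hs q hq

lemma rep_halve : ∀ t : ℕ, ∀ l : List (ℤ × ℕ), ∀ m : ℤ, l.length = t →
    Rep (2 * m) l → ∃ l' : List (ℤ × ℕ), l'.length ≤ t ∧ Rep m l' := by
  intro t
  induction t using Nat.strong_induction_on with
  | _ t ih =>
  intro l m hlen h
  by_cases hz : ∀ p ∈ l, ¬ p.2 = 0
  · obtain ⟨m', hm', hrep⟩ := rep_unshift h hz
    have : m = m' := by omega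
    subst this
    exact ⟨_, by simpa [hlen] using le_refl _, hrep⟩
  · -- there is a zero exponent; split
    have hsplit := rep_split h
    have hperm : (l.filter (fun p => p.2 = 0) ++ l.filter (fun p => ¬ p.2 = 0)).Perm l := by
      simpa using List.filter_append_perm (fun p => decide (p.2 = 0)) l
    set l₀ := l.filter (fun p => p.2 = 0) with hl₀
    set l₁ := l.filter (fun p => ¬ p.2 = 0) with hl₁
    have hlen01 : l₀.length + l₁.length = t := by
      rw [← hlen, ← List.length_append]
      exact hperm.length_eq
    have hd1 : (2:ℤ) ∣ (l₁.map val).sum := two_dvd_filter_pos_sum l h.1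
    have hsum : 2 * m = (l₀.map val).sum + (l₁.map val).sum := by
      have := hsplit.2
      simpa using this
    have hd0 : (2:ℤ) ∣ (l₀.map val).sum := by
      obtain ⟨c, hc⟩ := hd1
      exact ⟨m - c, by omega⟩
    have hval0 : ∀ p ∈ l₀, val p = p.1 := by
      intro p hp
      have : p.2 = 0 := by simpa using List.of_mem_filter hp
      simp [val, this]
    have hmem0 : ∀ p ∈ l₀, p ∈ l := fun p hp => List.mem_of_mem_filter hp
    have hmem1 : ∀ p ∈ l₁, p ∈ l := fun p hp => List.mem_of_mem_filter hp
    push_neg at hz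
    obtain ⟨p₀, hp₀l, hp₀z⟩ := hz
    have hne : l₀ ≠ [] := by
      intro hnil
      have : p₀ ∈ l₀ := List.mem_filter.mpr ⟨hp₀l, by simpa using hp₀z⟩
      simp [hnil] at this
    match hm0 : l₀ with
    | [] => exact absurd rfl hne
    | [x] =>
        exfalso
        have hx : x.1 = 1 ∨ x.1 = -1 := h.1 x (hmem0 x (by simp))
        simp [hval0 x (by simp)] at hd0
        rcases hx with hx | hx <;> rw [hx] at hd0 <;> omega
    | x :: y :: r =>
        have hx : x.1 = 1 ∨ x.1 = -1 := h.1 x (hmem0 x (by simp))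
        have hy : y.1 = 1 ∨ y.1 = -1 := h.1 y (hmem0 y (by simp))
        have hmemr : ∀ p ∈ r ++ l₁, p ∈ l := by
          intro p hp
          rcases List.mem_append.mp hp with hp | hp
          · exact hmem0 p (by simp [hp])
          · exact hmem1 p hp
        have hsum2 : 2 * m = x.1 + y.1 + (((r ++ l₁).map val).sum) := by
          rw [hsum]
          simp [hval0 x (by simp), hval0 y (by simp)]
          ring
        have hlen2 : r.length + l₁.length + 2 = t := by
          simpa [Nat.add_assoc, Nat.add_comm, Nat.add_left_comm] using hlen01
        have hsigns : ∀ p ∈ r ++ l₁, p.1 = 1 ∨ p.1 = -1 := fun p hp => h.1 p (hmemr p hp)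
        by_cases hxy : x.1 + y.1 = 0
        · have hrep : Rep (2 * m) (r ++ l₁) := ⟨hsigns, by rw [hsum2, hxy]; ring⟩
          obtain ⟨l', hl', hrep'⟩ := ih (r ++ l₁).length (by simp; omega) _ m rfl hrep
          exact ⟨l', by simp at hl' ⊢; omega, hrep'⟩
        · have hxy2 : x.1 = y.1 := by rcases hx with hx | hx <;> rcases hy with hy | hy <;> omega
          have hrep : Rep (2 * m) ((x.1, 1) :: (r ++ l₁)) := by
            refine ⟨?_, ?_⟩
            · intro p hp
              rcases List.mem_cons.mp hp with rfl | hp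
              · exact hx
              · exact hsigns p hp
            · simp only [List.map_cons, List.sum_cons]
              rw [hsum2, hxy2]
              simp [val]
              ring
          obtain ⟨l', hl', hrep'⟩ := ih ((x.1, 1) :: (r ++ l₁)).length (by simp; omega) _ m rfl hrep
          exact ⟨l', by simp at hl' ⊢; omega, hrep'⟩

lemma rep_extract_odd {n : ℤ} {l : List (ℤ × ℕ)} (h : Rep n l) (hodd : Odd n) :
    ∃ ε l', (ε = 1 ∨ ε = -1) ∧ l'.length + 1 = l.length ∧ Rep (n - ε) l' := by
  have hsplit := rep_split h
  have hperm : (l.filter (fun p => p.2 = 0) ++ l.filter (fun p => ¬ p.2 = 0)).Perm l := by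
    simpa using List.filter_append_perm (fun p => decide (p.2 = 0)) l
  set l₀ := l.filter (fun p => p.2 = 0) with hl₀
  set l₁ := l.filter (fun p => ¬ p.2 = 0) with hl₁
  have hlen01 : l₀.length + l₁.length = l.length := by
    rw [← List.length_append]
    exact hperm.length_eq
  have hd1 : (2:ℤ) ∣ (l₁.map val).sum := two_dvd_filter_pos_sum l h.1
  have hsum : n = (l₀.map val).sum + (l₁.map val).sum := by
    have := hsplit.2
    simpa using this
  have hval0 : ∀ p ∈ l₀, val p = p.1 := by
    intro p hp
    have : p.2 = 0 := by simpa using List.of_mem_filter hp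
    simp [val, this]
  have hmem0 : ∀ p ∈ l₀, p ∈ l := fun p hp => List.mem_of_mem_filter hp
  have hmem1 : ∀ p ∈ l₁, p ∈ l := fun p hp => List.mem_of_mem_filter hp
  match hm0 : l₀ with
  | [] =>
      exfalso
      obtain ⟨c, hc⟩ := hd1
      obtain ⟨d, hd⟩ := hodd
      simp at hsum
      omega
  | x :: r =>
      have hx : x.1 = 1 ∨ x.1 = -1 := h.1 x (hmem0 x (by simp))
      refine ⟨x.1, r ++ l₁, hx, ?_, ?_, ?_⟩
      · simp at hlen01 ⊢
        omega
      · intro p hp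
        rcases List.mem_append.mp hp with hp | hp
        · exact h.1 p (hmem0 p (by simp [hp]))
        · exact h.1 p (hmem1 p hp)
      · rw [hsum]
        simp [hval0 x (by simp)]
        ring


lemma Mk_nonneg : ∀ j, 0 ≤ Mk j
  | 0 => le_refl 0
  | j+1 => by have := Mk_nonneg j; simp [Mk]; omega

lemma odd_Nk (j : ℕ) : Odd (Nk j) := ⟨Mk (j-1), by unfold Nk; ring⟩

lemma odd_Mk_succ (i : ℕ) : Odd (Mk (i+1)) := ⟨2 * Mk i, by show 4 * Mk i + 1 = _; ring⟩

lemma rep_nonzero_len {n : ℤ} {l : List (ℤ × ℕ)} (h : Rep n l) (hn : n ≠ 0) :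
    1 ≤ l.length := by
  rcases l with _ | ⟨x, r⟩
  · exact absurd (rep_nil_eq h) hn
  · simp

lemma lb : ∀ t : ℕ, ∀ l : List (ℤ × ℕ), l.length = t → ∀ j : ℕ,
    (1 ≤ j → Rep (Nk j) l → j ≤ t) ∧ (Rep (Mk j) l → j ≤ t) := by
  intro t
  induction t using Nat.strong_induction_on with
  | _ t ih =>
  intro l hlen j
  constructor
  · intro hj hrep
    obtain ⟨ε, l', hε, hlen', hrep'⟩ := rep_extract_odd hrep (odd_Nk j)
    match j, hj with
    | 1, _ => omega
    | (i+2), _ =>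
      rcases hε with rfl | rfl
      · have e1 : Nk (i+2) - 1 = 2 * Mk (i+1) := by unfold Nk; simp
        rw [e1] at hrep'
        obtain ⟨l'', hl'', hrep''⟩ := rep_halve l'.length l' (Mk (i+1)) rfl hrep'
        have := (ih l''.length (by omega) l'' rfl (i+1)).2 hrep''
        omega
      · have e1 : Nk (i+2) - (-1) = 2 * (2 * Nk (i+1)) := by
          unfold Nk
          simp [Mk]
          ring
        rw [e1] at hrep'
        obtain ⟨l'', hl'', hrep''⟩ := rep_halve l'.length l' _ rfl hrep'
        obtain ⟨l3, hl3, hrep3⟩ := rep_halve l''.length l'' _ rfl hrep''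
        have := (ih l3.length (by omega) l3 rfl (i+1)).1 (by omega) hrep3
        omega
  · intro hrep
    match j with
    | 0 => omega
    | (i+1) =>
      obtain ⟨ε, l', hε, hlen', hrep'⟩ := rep_extract_odd hrep (odd_Mk_succ i)
      rcases hε with rfl | rfl
      · have e1 : Mk (i+1) - 1 = 2 * (2 * Mk i) := by simp [Mk]; ring
        rw [e1] at hrep'
        obtain ⟨l'', hl'', hrep''⟩ := rep_halve l'.length l' _ rfl hrep'
        obtain ⟨l3, hl3, hrep3⟩ := rep_halve l''.length l'' _ rfl hrep''
        have := (ih l3.length (by omega) l3 rfl i).2 hrep3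
        omega
      · have e1 : Mk (i+1) - (-1) = 2 * Nk (i+1) := by unfold Nk; simp [Mk]; ring
        rw [e1] at hrep'
        obtain ⟨l'', hl'', hrep''⟩ := rep_halve l'.length l' _ rfl hrep'
        have := (ih l''.length (by omega) l'' rfl (i+1)).1 (by omega) hrep''
        omega

lemma ub_M : ∀ j, ∃ l : List (ℤ × ℕ), l.length = j ∧ Rep (Mk j) l := by
  intro j
  induction j with
  | zero => exact ⟨[], rfl, by simp, by simp [Mk]⟩
  | succ i ihj =>
      obtain ⟨l, hlen, hrep⟩ := ihj
      have h2 := rep_cons 1 (Or.inl rfl) (rep_shift (rep_shift hrep))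
      refine ⟨(1, 0) :: List.map (fun p => (p.1, p.2 + 1)) (List.map (fun p => (p.1, p.2 + 1)) l),
        by simp [hlen], ?_⟩
      have h3 : Mk (i+1) = 2 * (2 * Mk i) + 1 := by simp [Mk]; ring
      rw [h3]
      exact h2

lemma ub_N (j : ℕ) : ∃ l : List (ℤ × ℕ), l.length = j - 1 + 1 ∧ Rep (Nk j) l := by
  obtain ⟨l, hlen, hrep⟩ := ub_M (j-1)
  have h2 := rep_cons 1 (Or.inl rfl) (rep_shift hrep)
  refine ⟨(1, 0) :: List.map (fun p => (p.1, p.2 + 1)) l, by simp [hlen], ?_⟩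
  have h3 : Nk j = 2 * Mk (j-1) + 1 := rfl
  rw [h3]
  exact h2

lemma Nk_succ (i : ℕ) (hi : 1 ≤ i) : Nk (i+1) = 4 * Nk i - 1 := by
  obtain ⟨i', rfl⟩ : ∃ i', i = i' + 1 := ⟨i - 1, by omega⟩
  unfold Nk
  simp [Mk]
  ring

lemma Nk_pos (j : ℕ) : 0 < Nk j := by
  have := Mk_nonneg (j-1)
  unfold Nk
  omega


lemma ub_small : ∀ n : ℕ, ∀ m : ℤ, m.toNat = n → 0 < m → ∀ k : ℕ, 1 ≤ k → m < Nk k →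
    ∃ l : List (ℤ × ℕ), l.length + 1 ≤ k ∧ Rep m l := by
  intro n
  induction n using Nat.strong_induction_on with
  | _ n ih =>
  intro m hmn hm k hk hmk
  have hk2 : 2 ≤ k := by
    by_contra hlt
    have hk1 : k = 1 := by omega
    rw [hk1] at hmk
    have : Nk 1 = 1 := by unfold Nk; simp [Mk]
    omega
  rcases Int.even_or_odd m with ⟨m', hm'⟩ | ⟨c, hc⟩
  · -- even case
    have hm'pos : 0 < m' := by omega
    have hm'lt : m' < Nk k := by omega
    obtain ⟨l, hl, hrep⟩ := ih m'.toNat (by omega) m' rfl hm'pos k hk hm'lt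
    refine ⟨List.map (fun p => (p.1, p.2 + 1)) l, by simpa using hl, ?_⟩
    have : m = 2 * m' := by omega
    rw [this]
    exact rep_shift hrep
  · -- odd case
    obtain ⟨ε, q, hε, hq⟩ : ∃ ε q : ℤ, (ε = 1 ∨ ε = -1) ∧ m = 4 * q + ε := by
      rcases Int.even_or_odd c with ⟨d, hd⟩ | ⟨d, hd⟩
      · exact ⟨1, d, Or.inl rfl, by omega⟩
      · exact ⟨-1, d + 1, Or.inr rfl, by omega⟩
    have hqnn : 0 ≤ q := by rcases hε with rfl | rfl <;> omega
    rcases eq_or_lt_of_le hqnn with hq0 | hqpos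
    · -- q = 0 : m = ε, positive, so m = 1
      have hm1 : m = 1 := by rcases hε with rfl | rfl <;> omega
      refine ⟨[(1, 0)], by simpa using hk2, ?_⟩
      constructor
      · intro p hp
        simp at hp
        simp [hp]
      · simp [val, hm1]
    · -- q ≥ 1
      obtain ⟨k', rfl⟩ : ∃ k', k = k' + 1 := ⟨k - 1, by omega⟩
      have hk' : 1 ≤ k' := by omega
      have hNsucc : Nk (k' + 1) = 4 * Nk k' - 1 := Nk_succ k' hk'
      have hqlt : q < Nk k' := by rcases hε with rfl | rfl <;> omega
      have hqm : q.toNat < n := by omega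
      obtain ⟨l, hl, hrep⟩ := ih q.toNat hqm q rfl hqpos k' hk' hqlt
      have h2 := rep_cons ε hε (rep_shift (rep_shift hrep))
      refine ⟨(ε, 0) :: List.map (fun p => (p.1, p.2 + 1)) (List.map (fun p => (p.1, p.2 + 1)) l),
        by simp; omega, ?_⟩
      have : m = 2 * (2 * q) + ε := by omega
      rw [this]
      exact h2

lemma mem_iff (n : ℤ) (k : ℕ) :
    (∃ δ : Fin k → ℤ, ∃ e : Fin k → ℕ,
      (∀ j, δ j = 1 ∨ δ j = -1) ∧ n = ∑ j, δ j * (2:ℤ) ^ (e j))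
    ↔ ∃ l : List (ℤ × ℕ), l.length = k ∧ Rep n l := by
  constructor
  · rintro ⟨δ, e, hs, hsum⟩
    refine ⟨List.ofFn (fun j => (δ j, e j)), by simp, ?_, ?_⟩
    · intro p hp
      rw [List.mem_ofFn] at hp
      obtain ⟨j, rfl⟩ := hp
      exact hs j
    · rw [List.map_ofFn, List.sum_ofFn]
      exact hsum
  · rintro ⟨l, rfl, hs, hsum⟩
    refine ⟨fun j => (l.get j).1, fun j => (l.get j).2, fun j => hs _ (l.get_mem j), ?_⟩
    rw [hsum]
    conv_lhs => rw [← List.ofFn_get l]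
    rw [List.map_ofFn, List.sum_ofFn]
    rfl

lemma Mk3 : ∀ j : ℕ, 3 * Mk j = 4 ^ j - 1
  | 0 => by simp [Mk]
  | j+1 => by
      have := Mk3 j
      simp [Mk, pow_succ]
      linarith

lemma Nk3 (k : ℕ) (hk : 1 ≤ k) : 3 * Nk k = 2 ^ (2 * k - 1) + 1 := by
  have h1 := Mk3 (k - 1)
  have h2 : (4:ℤ) ^ (k-1) = 2 ^ (2*(k-1)) := by
    rw [pow_mul]
    norm_num
  have h3 : (2:ℤ) ^ (2*k-1) = 2 * 2 ^ (2*(k-1)) := by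
    rw [← pow_succ']
    congr 1
    omega
  unfold Nk
  rw [h3, ← h2]
  linarith

end TwoLen

open TwoLen in
/-- The smallest positive integer of 2-length k is (2^(2k-1) + 1)/3. -/
theorem smallest_of_two_length (k : ℕ) (hk : 1 ≤ k) :
    IsLeast {m : ℤ | 0 < m ∧ glen 2 m = k} ((2 ^ (2 * k - 1) + 1) / 3) := by
  have hdiv : ((2:ℤ) ^ (2 * k - 1) + 1) / 3 = Nk k := by
    rw [← Nk3 k hk, Int.mul_ediv_cancel_left _ (by norm_num)]
  rw [hdiv]
  have hmemk : k ∈ {t : ℕ | ∃ δ : Fin t → ℤ, ∃ e : Fin t → ℕ,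
      (∀ j, δ j = 1 ∨ δ j = -1) ∧ Nk k = ∑ j, δ j * (2:ℤ) ^ (e j)} := by
    apply (mem_iff (Nk k) k).mpr
    obtain ⟨l, hlen, hrep⟩ := ub_N k
    exact ⟨l, by omega, hrep⟩
  have hglen : glen 2 (Nk k) = k := by
    unfold glen
    apply le_antisymm (Nat.sInf_le hmemk)
    apply le_csInf ⟨k, hmemk⟩
    intro b hb
    obtain ⟨l, hlen, hrep⟩ := (mem_iff (Nk k) b).mp hb
    exact (lb b l hlen k).1 hk hrep
  constructor
  · exact ⟨Nk_pos k, hglen⟩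
  · rintro m ⟨hm, hglm⟩
    by_contra hlt
    push_neg at hlt
    obtain ⟨l, hl, hrep⟩ := ub_small m.toNat m rfl hm k hk hlt
    have hmem : l.length ∈ {t : ℕ | ∃ δ : Fin t → ℤ, ∃ e : Fin t → ℕ,
        (∀ j, δ j = 1 ∨ δ j = -1) ∧ m = ∑ j, δ j * (2:ℤ) ^ (e j)} :=
      (mem_iff m l.length).mpr ⟨l, rfl, hrep⟩
    have : glen 2 m ≤ l.length := Nat.sInf_le hmem
    omega
end

section
/- If the ternary Goldbach theorem holds (every odd integer greater than 5 is a sum of three primes), then every integer n has ℓ_𝒫(n) ≤ 4, where ℓ_𝒫(n) is the minimal number of terms of the form ±p^i (p prime, i ≥ 0) summing to n. -/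
/-- The 𝒫-length of n: minimal number of summands ±p^i (p prime) needed to write n. -/
noncomputable def plen (n : ℤ) : ℕ :=
  sInf {k : ℕ | ∃ δ : Fin k → ℤ, ∃ p : Fin k → ℕ, ∃ e : Fin k → ℕ,
    (∀ j, δ j = 1 ∨ δ j = -1) ∧ (∀ j, (p j).Prime) ∧
    n = ∑ j, δ j * ((p j : ℤ)) ^ (e j)}

def PRep (n : ℤ) (k : ℕ) : Prop :=
  ∃ δ : Fin k → ℤ, ∃ p : Fin k → ℕ, ∃ e : Fin k → ℕ,
    (∀ j, δ j = 1 ∨ δ j = -1) ∧ (∀ j, (p j).Prime) ∧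
    n = ∑ j, δ j * ((p j : ℤ)) ^ (e j)

lemma prep_neg {n : ℤ} {k : ℕ} (h : PRep n k) : PRep (-n) k := by
  obtain ⟨δ, p, e, h1, h2, h3⟩ := h
  refine ⟨fun j => -δ j, p, e, fun j => ?_, h2, ?_⟩
  · rcases h1 j with h | h <;> simp [h]
  · simp [h3, neg_mul, Finset.sum_neg_distrib]

lemma prep_ones (m : ℕ) : PRep (m : ℤ) m := by
  refine ⟨fun _ => 1, fun _ => 2, fun _ => 0, fun _ => Or.inl rfl,
    fun _ => Nat.prime_two, ?_⟩
  simp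

lemma prep_six : PRep 6 2 := by
  refine ⟨![1, 1], ![5, 2], ![1, 0], ?_, ?_, ?_⟩
  · intro j; fin_cases j <;> simp
  · intro j; fin_cases j <;> norm_num
  · simp [Fin.sum_univ_succ]

lemma prep_five : PRep 5 1 := by
  refine ⟨![1], ![5], ![1], ?_, ?_, ?_⟩
  · intro j; fin_cases j <;> simp
  · intro j; fin_cases j <;> norm_num
  · simp [Fin.sum_univ_succ]

lemma prep_three {n : ℤ} {p q r : ℕ} (hp : p.Prime) (hq : q.Prime) (hr : r.Prime)
    (h : n = (p : ℤ) + q + r) : PRep n 3 := by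
  refine ⟨![1, 1, 1], ![p, q, r], ![1, 1, 1], ?_, ?_, ?_⟩
  · intro j; fin_cases j <;> simp
  · intro j; fin_cases j <;> simpa
  · simp [Fin.sum_univ_succ, h]; ring

lemma prep_four {n : ℤ} {p q r : ℕ} (hp : p.Prime) (hq : q.Prime) (hr : r.Prime)
    (h : n = (p : ℤ) + q + r + 1) : PRep n 4 := by
  refine ⟨![1, 1, 1, 1], ![p, q, r, 2], ![1, 1, 1, 0], ?_, ?_, ?_⟩
  · intro j; fin_cases j <;> simp
  · intro j; fin_cases j <;> simp [hp, hq, hr, Nat.prime_two]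
  · simp [Fin.sum_univ_succ, h]; ring

lemma key (goldbach3 : ∀ n : ℤ, Odd n → 5 < n →
      ∃ p q r : ℕ, p.Prime ∧ q.Prime ∧ r.Prime ∧ n = (p : ℤ) + q + r)
    (n : ℤ) (hn : 0 ≤ n) : ∃ k, k ≤ 4 ∧ PRep n k := by
  rcases le_or_gt n 4 with h4 | h4
  · refine ⟨n.toNat, by omega, ?_⟩
    have : ((n.toNat : ℤ)) = n := Int.toNat_of_nonneg hn
    rw [← this]
    exact prep_ones n.toNat
  · rcases Int.even_or_odd n with he | ho
    · -- n even, n ≥ 6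
      rcases eq_or_lt_of_le (show (6 : ℤ) ≤ n by rcases he with ⟨m, hm⟩; omega) with h6 | h6
      · exact ⟨2, by omega, h6 ▸ prep_six⟩
      · have hodd : Odd (n - 1) := by
          rcases he with ⟨m, hm⟩; exact ⟨m - 1, by omega⟩
        obtain ⟨p, q, r, hp, hq, hr, hsum⟩ := goldbach3 (n - 1) hodd (by omega)
        exact ⟨4, le_refl _, prep_four hp hq hr (by omega)⟩
    · rcases eq_or_lt_of_le (show (5 : ℤ) ≤ n by omega) with h5 | h5
      · exact ⟨1, by omega, h5 ▸ prep_five⟩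
      · obtain ⟨p, q, r, hp, hq, hr, hsum⟩ := goldbach3 n ho h5
        exact ⟨3, by omega, prep_three hp hq hr hsum⟩

/-- The ternary Goldbach theorem implies every integer has 𝒫-length at most 4. -/
theorem plen_le_four_of_ternary_goldbach
    (goldbach3 : ∀ n : ℤ, Odd n → 5 < n →
      ∃ p q r : ℕ, p.Prime ∧ q.Prime ∧ r.Prime ∧ n = (p : ℤ) + q + r) :
    ∀ n : ℤ, plen n ≤ 4 := by
  intro n
  have : ∃ k, k ≤ 4 ∧ PRep n k := by
    rcases le_or_gt 0 n with h | h
    · exact key goldbach3 n h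
    · obtain ⟨k, hk, hr⟩ := key goldbach3 (-n) (by omega)
      exact ⟨k, hk, by simpa using prep_neg hr⟩
  obtain ⟨k, hk, hr⟩ := this
  calc plen n ≤ k := Nat.sInf_le hr
    _ ≤ 4 := hk
end
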